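/- arXiv:1804.10260 — 4 statements merged into one kernel-verified Lean document; each statement's English description precedes it below -/
import Mathlib

section
/- Let d ≥ 3, n ≥ 1, X ⊂ (ℤ^d)^{n−1}, and let K_1,…,K_n each be of the form ∇_i(−Δ)^{−1}∇_{i'}^*. Suppose M : ℤ^d × ℤ^d → [0,∞) is a function such that for every choice of functions b_1,…,b_n : ℤ^d → ℂ with ‖b_j‖_∞ ≤ 1, the kernels K^j(x,y) := K_j(x−y) b_j(y) satisfy |T^n_X(x_0,x_n)| ≤ M(x_0,x_n). Then |f_X(x_0,x_n)| ≤ 2^n M(x_0,x_n) for all x_0, x_n ∈ ℤ^d. -/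
open MeasureTheory ProbabilityTheory
open scoped ENNReal NNReal BigOperators

noncomputable section

/-- The lattice `ℤ^d`. -/
abbrev V (d : ℕ) := Fin d → ℤ

/-- Euclidean norm of a lattice point. -/
def znorm {d : ℕ} (x : V d) : ℝ := Real.sqrt (∑ i, ((x i : ℝ)) ^ 2)

/-- Japanese bracket `⟨x⟩ = 1 + |x|`. -/
def jap {d : ℕ} (x : V d) : ℝ := 1 + znorm x

/-- The `j`-th standard unit vector. -/
def unitVec (d : ℕ) (j : Fin d) : V d := fun k => if k = j then 1 else 0

/-- Discrete derivative `∇_j u(x) = u(x+e_j) - u(x)`. -/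
def grad {d : ℕ} (j : Fin d) (u : V d → ℂ) : V d → ℂ := fun x =>
  u (x + unitVec d j) - u x

/-- Adjoint discrete derivative `∇_j^* u(x) = u(x-e_j) - u(x)`. -/
def gradStar {d : ℕ} (j : Fin d) (u : V d → ℂ) : V d → ℂ := fun x =>
  u (x - unitVec d j) - u x

/-- Negative discrete Laplacian `-Δ = ∑_j ∇_j^* ∇_j`. -/
def negLap {d : ℕ} (u : V d → ℂ) : V d → ℂ := fun x => ∑ j, gradStar j (grad j u) x

/-- Iterated discrete derivative `∇_j^k`. -/
def gradPow {d : ℕ} (j : Fin d) : ℕ → (V d → ℂ) → V d → ℂ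
  | 0 => fun u => u
  | k + 1 => fun u => grad j (gradPow j k u)

/-- Multi-index discrete derivative `∇^α = ∇_1^{α_1} ⋯ ∇_d^{α_d}`. -/
def gradMulti {d : ℕ} (α : Fin d → ℕ) (u : V d → ℂ) : V d → ℂ :=
  ((List.ofFn fun j : Fin d => (gradPow j (α j) : (V d → ℂ) → V d → ℂ)).foldr
      (fun F G => F ∘ G) id) u

/-- The box `[-π,π]^d`. -/
def piBox (d : ℕ) : Set (Fin d → ℝ) := Set.univ.pi fun _ => Set.Icc (-Real.pi) Real.pi

/-- Convolution kernel of the singular integral operator `∇_i (-Δ)^{-1} ∇_{i'}^*`. -/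
def sioKernel (d : ℕ) (i i' : Fin d) (x : V d) : ℂ :=
  (2 * Real.pi : ℂ) ^ (-(d : ℤ)) *
    ∫ θ in piBox d,
      (Complex.exp (Complex.I * (θ i : ℂ)) - 1) *
        (Complex.exp (-(Complex.I * (θ i' : ℂ))) - 1) *
        ((((∑ j, 2 * (1 - Real.cos (θ j))) : ℝ)⁻¹ : ℂ)) *
        Complex.exp (Complex.I * ((∑ j, θ j * (x j : ℝ) : ℝ) : ℂ))

/-- The full path `x_0, x_1, …, x_{n-1}, x_n` determined by endpoints `x_0, x_n` and
interior points `y = (x_1, …, x_{n-1})`. -/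
def fullPath {d : ℕ} (n : ℕ) (x0 xn : V d) (y : Fin (n - 1) → V d) (j : ℕ) : V d :=
  if hj : j = 0 then x0 else if h : j < n then y ⟨j - 1, by omega⟩ else xn

/-- The iterated kernel `T^n_S(x_0,x_n)` summed over interior paths in `S`. -/
def Tn {d : ℕ} (n : ℕ) (K : Fin n → V d → V d → ℂ) (S : Set (Fin (n - 1) → V d))
    (x0 xn : V d) : ℂ :=
  ∑' y : S, ∏ j : Fin n,
    K j (fullPath n x0 xn (y : Fin (n - 1) → V d) (j : ℕ))
      (fullPath n x0 xn (y : Fin (n - 1) → V d) ((j : ℕ) + 1))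

/-- Kernels made from convolution kernels `K_j` of the form `∇_i (-Δ)^{-1} ∇_{i'}^*`
multiplied by bounded functions `b_j`: `K^j(x,y) = K_j(x-y) b_j(y)`. -/
def sioK {d : ℕ} (n : ℕ) (idx : Fin n → Fin d × Fin d) (b : Fin n → V d → ℂ) :
    Fin n → V d → V d → ℂ :=
  fun j x y => sioKernel d (idx j).1 (idx j).2 (x - y) * b j y

/-- Nested alternation `σ(x_0)·(I−E)[σ(x_1)·(I−E)[⋯ (I−E)[σ(x_n)]⋯]]` (before the
outermost expectation). -/
def nestFn {Ω : Type*} [MeasurableSpace Ω] {d : ℕ} (P : Measure Ω) (σ : V d → Ω → ℝ) :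
    List (V d) → Ω → ℝ
  | [] => fun _ => 0
  | [x] => fun ω => σ x ω
  | x :: y :: l => fun ω =>
      σ x ω * (nestFn P σ (y :: l) ω - ∫ ω', nestFn P σ (y :: l) ω' ∂P)

/-- `W(x_0,…,x_n) = E[σ(x_0)·(I−E)[σ(x_1)·(I−E)[⋯ (I−E)[σ(x_n)]⋯]]]`. -/
def Wnest {Ω : Type*} [MeasurableSpace Ω] {d : ℕ} (P : Measure Ω) (σ : V d → Ω → ℝ)
    (l : List (V d)) : ℝ := ∫ ω, nestFn P σ l ω ∂P

/-- `f_X(x_0,x_n) = ∑_{x̄ ∈ X} K_1(x_0-x_1)⋯K_n(x_{n-1}-x_n)·W(x_0,…,x_n)`. -/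
def fX {Ω : Type*} [MeasurableSpace Ω] {d : ℕ} (P : Measure Ω) (σ : V d → Ω → ℝ)
    (n : ℕ) (Kc : Fin n → V d → ℂ) (X : Set (Fin (n - 1) → V d)) (x0 xn : V d) : ℂ :=
  ∑' y : X,
    (∏ j : Fin n, Kc j (fullPath n x0 xn (y : Fin (n - 1) → V d) (j : ℕ) -
        fullPath n x0 xn (y : Fin (n - 1) → V d) ((j : ℕ) + 1))) *
      ((Wnest P σ ((List.range (n + 1)).map
          (fullPath n x0 xn (y : Fin (n - 1) → V d))) : ℝ) : ℂ)

/-! ### Sets of paths -/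

/-- `S^m_{j_0}`: paths whose longest segment has dyadic scale `2^m`, first achieved at `j_0`. -/
def Sset {d : ℕ} (n : ℕ) (x0 xn : V d) (m j0 : ℕ) : Set (Fin (n - 1) → V d) :=
  { y | (∀ j < n, znorm (fullPath n x0 xn y j - fullPath n x0 xn y (j + 1)) <
          (2 : ℝ) ^ (m + 1)) ∧
      (2 : ℝ) ^ m ≤ znorm (fullPath n x0 xn y j0 - fullPath n x0 xn y (j0 + 1)) ∧
      (∀ j < j0, znorm (fullPath n x0 xn y j - fullPath n x0 xn y (j + 1)) < (2 : ℝ) ^ m) }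

/-- `S̃^m_{j_0}`: paths in `S^m_{j_0}` with `{x_0,…,x_{j_0}} ∩ {x_{j_0+1},…,x_n} ≠ ∅`. -/
def StildeSet {d : ℕ} (n : ℕ) (x0 xn : V d) (m j0 : ℕ) : Set (Fin (n - 1) → V d) :=
  { y ∈ Sset n x0 xn m j0 |
      ∃ a, a ≤ j0 ∧ ∃ b, j0 < b ∧ b ≤ n ∧ fullPath n x0 xn y a = fullPath n x0 xn y b }

/-- Paths with a coincidence `x_u = x_v`. -/
def coincSet {d : ℕ} (n : ℕ) (x0 xn : V d) (u v : ℕ) : Set (Fin (n - 1) → V d) :=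
  { y | fullPath n x0 xn y u = fullPath n x0 xn y v }

/-- Paths avoiding coincidences between indices in `E` and `F`. -/
def avoidSet {d : ℕ} (n : ℕ) (x0 xn : V d) (E F : Finset ℕ) : Set (Fin (n - 1) → V d) :=
  { y | ∀ u ∈ E, ∀ v ∈ F, fullPath n x0 xn y u ≠ fullPath n x0 xn y v }

/-- Irreducible paths from `x_0` to `x_n`. -/
def irredSet {d : ℕ} (n : ℕ) (x0 xn : V d) : Set (Fin (n - 1) → V d) :=
  { y | ∀ j < n, ∃ a, a ≤ j ∧ ∃ b, j < b ∧ b ≤ n ∧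
      fullPath n x0 xn y a = fullPath n x0 xn y b }

/-- Truncation to paths all of whose segments are shorter than `2^k`. -/
def Xkset {d : ℕ} (n k : ℕ) (x0 xn : V d) : Set (Fin (n - 1) → V d) :=
  { y | ∀ j < n, znorm (fullPath n x0 xn y j - fullPath n x0 xn y (j + 1)) < (2 : ℝ) ^ k }

/-- `V_{i,j} = { x̄ : x_i = x_n, x_j = x_0 }`. -/
def Vset {d : ℕ} (n : ℕ) (x0 xn : V d) (i j : ℕ) : Set (Fin (n - 1) → V d) :=
  { y | fullPath n x0 xn y i = xn ∧ fullPath n x0 xn y j = x0 }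

/-- `V'_{i,j}`. -/
def Vset' {d : ℕ} (n : ℕ) (x0 xn : V d) (i j : ℕ) : Set (Fin (n - 1) → V d) :=
  Vset n x0 xn i j ∩ { y | ∀ l, j < l → l < n → fullPath n x0 xn y l ≠ x0 } ∩
    { y | ∀ l, 1 ≤ l → l < i → fullPath n x0 xn y l ≠ xn }

/-- `S_{k_0}` (second long segment, with minimality condition `(*)`). -/
def SK0set {d : ℕ} (n : ℕ) (x0 xn : V d) (j1 j2 k0 : ℕ) : Set (Fin (n - 1) → V d) :=
  { y | znorm (x0 - xn) / n ≤
        znorm (fullPath n x0 xn y k0 - fullPath n x0 xn y (k0 + 1)) ∧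
      (if k0 < j1 then
        ∀ j < k0, znorm (fullPath n x0 xn y j - fullPath n x0 xn y (j + 1)) <
          znorm (x0 - xn) / n
       else
        (∀ j < j1, znorm (fullPath n x0 xn y j - fullPath n x0 xn y (j + 1)) <
            znorm (x0 - xn) / n) ∧
          ∀ j, j2 ≤ j → j < k0 →
            znorm (fullPath n x0 xn y j - fullPath n x0 xn y (j + 1)) <
              znorm (x0 - xn) / n) }

/-- `S'_{j_0,j_1,j_2}`. -/
def SprimeJ {d : ℕ} (n : ℕ) (x0 xn : V d) (m j0 j1 j2 : ℕ) : Set (Fin (n - 1) → V d) :=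
  (StildeSet n x0 xn m j0 ∩ coincSet n x0 xn j1 j2) \
    ((⋃ j, ⋃ (_ : j < j1), ⋃ j', ⋃ (_ : j0 < j'), ⋃ (_ : j' ≤ n),
        StildeSet n x0 xn m j0 ∩ coincSet n x0 xn j j') ∪
      ⋃ j', ⋃ (_ : j0 < j'), ⋃ (_ : j' < j2),
        StildeSet n x0 xn m j0 ∩ coincSet n x0 xn j1 j')

/-- `S'_{k_0,k_1,k_2}`. -/
def SprimeK {d : ℕ} (n : ℕ) (x0 xn : V d) (k0 k1 k2 : ℕ) : Set (Fin (n - 1) → V d) :=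
  coincSet n x0 xn k1 k2 \
    ((⋃ k, ⋃ (_ : k < k1), ⋃ k', ⋃ (_ : k0 < k'), ⋃ (_ : k' ≤ n), coincSet n x0 xn k k') ∪
      ⋃ k', ⋃ (_ : k0 < k'), ⋃ (_ : k' < k2), coincSet n x0 xn k1 k')

/-- Value of an interior path at an index `u ∈ (0,n)`. -/
def pathVal {d : ℕ} (n : ℕ) (y : Fin (n - 1) → V d) (u : ℕ) : V d :=
  if h : u - 1 < n - 1 then y ⟨u - 1, h⟩ else 0

/-! ### Kernel assumptions -/

/-- Assumption (i): `|K(x,y)| ≤ A ⟨x-y⟩^{-d}`. -/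
def kerBound {d : ℕ} (A : ℝ) (K : V d → V d → ℂ) : Prop :=
  ∀ x y : V d, ‖K x y‖ ≤ A * jap (x - y) ^ (-(d : ℝ))

/-- Adjoint kernel `K^*(x,y) = conj (K(y,x))`. -/
def adjK {d : ℕ} (K : V d → V d → ℂ) : V d → V d → ℂ := fun x y => starRingEnd ℂ (K y x)

/-- Truncation `K_I(x,y) = K(x,y) χ_I(|x-y|)`. -/
def truncD {d : ℕ} (K : V d → V d → ℂ) (I : Set ℝ) : V d → V d → ℂ :=
  fun x y => I.indicator (fun _ => K x y) (znorm (x - y))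

/-- `‖K‖_{ℓ^p → ℓ^p} ≤ C`, formulated on finitely supported functions. -/
def OpNormLE {d : ℕ} (K : V d → V d → ℂ) (p C : ℝ) : Prop :=
  ∀ f : V d → ℂ, (Function.support f).Finite →
    ∑' x : V d, (‖∑' y : V d, K x y * f y‖₊ : ℝ≥0∞) ^ p ≤
      ENNReal.ofReal C ^ p * ∑' x : V d, (‖f x‖₊ : ℝ≥0∞) ^ p

/-- Assumption (ii): `sup_m (‖K_{I_m}‖_{ℓ^p→ℓ^p} + ‖(K_{I_m})^*‖_{ℓ^p→ℓ^p}) ≤ A/(p-1)` for all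
sufficiently small `p > 1`. -/
def kerAssump2 {d : ℕ} (A : ℝ) (K : V d → V d → ℂ) : Prop :=
  ∃ p₀ : ℝ, 1 < p₀ ∧ ∀ p : ℝ, 1 < p → p ≤ p₀ → ∀ m : ℕ,
    ∃ C₁ C₂ : ℝ, 0 ≤ C₁ ∧ 0 ≤ C₂ ∧ C₁ + C₂ ≤ A / (p - 1) ∧
      OpNormLE (truncD K (Set.Ico (0 : ℝ) (2 ^ m))) p C₁ ∧
      OpNormLE (adjK (truncD K (Set.Ico (0 : ℝ) (2 ^ m)))) p C₂

/-- Kernels modified by bounded factors: `e^j_1(x) K^j(x,y) e^j_2(y)`. -/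
def modTn {d : ℕ} (n : ℕ) (K : Fin n → V d → V d → ℂ) (e1 e2 : Fin n → V d → ℂ) :
    Fin n → V d → V d → ℂ :=
  fun j x y => e1 j x * K j x y * e2 j y

/-! ### Operators and function spaces on `ℤ^d` -/

/-- `f ∈ ℓ^2(ℤ^d)`. -/
def Meml2 {d : ℕ} (f : V d → ℂ) : Prop := Summable fun x : V d => ‖f x‖ ^ 2

/-- `f ∈ ℓ^p(ℤ^d)` for a real exponent `p`. -/
def Memlp {d : ℕ} (p : ℝ) (f : V d → ℂ) : Prop := Summable fun x : V d => ‖f x‖ ^ p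

/-- The `ℓ^2` norm. -/
def l2norm {d : ℕ} (f : V d → ℂ) : ℝ := Real.sqrt (∑' x : V d, ‖f x‖ ^ 2)

/-- Convolution kernel of the Fourier multiplier `Λ^{-1}` with symbol
`(∑_j 2(1-cos θ_j))^{-1/2}`. -/
def lamKer (d : ℕ) (x : V d) : ℂ :=
  (2 * Real.pi : ℂ) ^ (-(d : ℤ)) *
    ∫ θ in piBox d,
      (((((∑ j, 2 * (1 - Real.cos (θ j))) : ℝ) ^ (-(1 / 2 : ℝ)) : ℝ)) : ℂ) *
        Complex.exp (Complex.I * ((∑ j, θ j * (x j : ℝ) : ℝ) : ℂ))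

/-- The operator `Λ^{-1}`, as convolution with `lamKer`. -/
def lamInv {d : ℕ} (f : V d → ℂ) : V d → ℂ := fun x => ∑' y : V d, lamKer d (x - y) * f y

/-- `u ∈ H^1(ℤ^d) = Λ^{-1}[ℓ^2(ℤ^d)]`. -/
def InH1 {d : ℕ} (u : V d → ℂ) : Prop := ∃ f, Meml2 f ∧ u = lamInv f

/-- The operator `L = -Δ + δ ∇^* σ ∇ = ∑_j ∇_j^*((1+δσ)∇_j ·)`. -/
def Lop {d : ℕ} (δ : ℝ) (s : V d → ℝ) (u : V d → ℂ) : V d → ℂ := fun x =>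
  ∑ j, ((((1 + δ * s (x - unitVec d j) : ℝ)) : ℂ) * grad j u (x - unitVec d j) -
    (((1 + δ * s x : ℝ)) : ℂ) * grad j u x)

/-- The delta function at the origin. -/
def delta0 (d : ℕ) : V d → ℂ := fun x => if x = 0 then 1 else 0

/-- The right-hand side of Bourgain's representation:
`(1 + δ·E[σ(0)])(-Δ)u + ∑_{i,j} ∇_i^*(K_{i,j} * (∇_j u))`. -/
def LKrep {d : ℕ} {Ω : Type*} [MeasurableSpace Ω] (P : Measure Ω) (σ : V d → Ω → ℝ)
    (δ : ℝ) (K : Fin d → Fin d → V d → ℝ) (u : V d → ℂ) : V d → ℂ := fun x =>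
  (((1 + δ * ∫ ω, σ (0 : V d) ω ∂P : ℝ)) : ℂ) * negLap u x +
    ∑ i, ∑ j,
      gradStar i (fun z => ∑' y : V d, ((K i j y : ℝ) : ℂ) * grad j u (z - y)) x

/-- The Fourier transform `θ ↦ ∑_x K(x) e^{-iθ·x}` of a function on `ℤ^d`. -/
def FTK (d : ℕ) (K : V d → ℝ) (θ : Fin d → ℝ) : ℂ :=
  ∑' x : V d, (K x : ℂ) * Complex.exp (-(Complex.I * ((∑ j, θ j * (x j : ℝ) : ℝ) : ℂ)))

/-- Membership in the Hölder space `C^{2d-1, 1-ε}(𝕋^d)` of the Fourier transform of `Kf`. -/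
def HolderCond (d : ℕ) (ε : ℝ) (Kf : V d → ℝ) : Prop :=
  ContDiff ℝ (2 * d - 1 : ℕ) (FTK d Kf) ∧
    ∃ CH : ℝ≥0, HolderWith CH (1 - ε).toNNReal (iteratedFDeriv ℝ (2 * d - 1) (FTK d Kf))


/-- The hypothesis of the disjointification lemma: the bound `M` holds for all kernels
modified by factors bounded by `1`. -/
def modBound {d : ℕ} (n : ℕ) (K : Fin n → V d → V d → ℂ) (S : Set (Fin (n - 1) → V d))
    (x0 xn : V d) (M : ℝ) : Prop :=
  ∀ e1 e2 : Fin n → V d → ℂ, (∀ j x, ‖e1 j x‖ ≤ 1) → (∀ j x, ‖e2 j x‖ ≤ 1) →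
    ‖Tn n (modTn n K e1 e2) S x0 xn‖ ≤ M

end

/-!
Expanding every `I - E` in the nested alternation writes `W(x_0,…,x_n)` as an alternating sum,
over the `2^n` sets `S ⊆ {0,…,n-1}` of positions where `-E` is chosen, of products of
expectations, one for each block of consecutive indices between cuts. Such a product is a single
expectation over independent copies `ω_0, ω_1, …` of the sample: that of
`∏_j σ(x_j)(ω_{block of j})`. For fixed copies, the factors with `j ≥ 1` are multipliers
`b_j(x_j)` bounded by `1`, so the path sum is `σ(x_0)` times some `T^n_X(x_0,x_n)` with modified
kernels, which is at most `M(x_0,x_n)`. Averaging keeps the bound and the `2^n` choices of `S`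
give the factor `2^n`. To stay with finite sums, the paths are first restricted to interior
points in a finite box `G`, which amounts to multipliers vanishing off `G`; the bound then passes
to the limit `G → ℤ^d`.
-/

open Finset Filter MeasureTheory

section BlockIndex

/-- Cutting `0, 1, 2, …` after each element of `S` into consecutive blocks, `j` lies in block
number `blockIndex S j`. -/
def blockIndex (S : Finset ℕ) (j : ℕ) : ℕ := #{i ∈ S | i < j}

@[simp] lemma blockIndex_zero (S : Finset ℕ) : blockIndex S 0 = 0 := by
  simp [blockIndex]

lemma blockIndex_le_card (S : Finset ℕ) (j : ℕ) : blockIndex S j ≤ #S :=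
  card_filter_le _ _

lemma blockIndex_map_succ (S : Finset ℕ) (j : ℕ) :
    blockIndex (S.map (addRightEmbedding 1)) (j + 1) = blockIndex S j := by
  simp [blockIndex, filter_map]

lemma blockIndex_insert_zero_map_succ (S : Finset ℕ) (j : ℕ) :
    blockIndex (insert 0 (S.map (addRightEmbedding 1))) (j + 1) = blockIndex S j + 1 := by
  rw [blockIndex, filter_insert, if_pos j.succ_pos, card_insert_of_notMem (by simp)]
  exact congrArg (· + 1) (blockIndex_map_succ S j)

lemma sum_powerset_range_succ {M : Type*} [AddCommMonoid M] (m : ℕ) (f : Finset ℕ → M) :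
    ∑ S ∈ (range (m + 1)).powerset, f S =
      ∑ S ∈ (range m).powerset,
        (f (S.map (addRightEmbedding 1)) + f (insert 0 (S.map (addRightEmbedding 1)))) := by
  have hinj : Set.InjOn (fun S : Finset ℕ => S.image (addRightEmbedding 1)) (range m).powerset :=
    fun _ _ _ _ h => image_injective (addRightEmbedding 1).injective h
  rw [show range (m + 1) = insert 0 ((range m).map (addRightEmbedding 1)) from range_add_one' m,
    sum_powerset_insert (by simp), sum_add_distrib]
  simp only [map_eq_image, powerset_image, sum_image hinj]

end BlockIndex

section BlockProd

variable {ι Ω : Type*}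

def blockProd (σ : ι → Ω → ℝ) (p : ℕ → ι) (m : ℕ) (S : Finset ℕ) (i : ℕ) (ω : Ω) : ℝ :=
  ∏ j ∈ range (m + 1), if blockIndex S j = i then σ (p j) ω else 1

variable (σ : ι → Ω → ℝ) (p : ℕ → ι) (m : ℕ) (S : Finset ℕ) (ω : Ω)

lemma blockProd_map_succ_zero :
    blockProd σ p (m + 1) (S.map (addRightEmbedding 1)) 0 ω =
      σ (p 0) ω * blockProd σ (fun j => p (j + 1)) m S 0 ω := by
  simp [blockProd, prod_range_succ' _ (m + 1), blockIndex_map_succ, mul_comm]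

lemma blockProd_map_succ_succ (i : ℕ) :
    blockProd σ p (m + 1) (S.map (addRightEmbedding 1)) (i + 1) ω =
      blockProd σ (fun j => p (j + 1)) m S (i + 1) ω := by
  simp [blockProd, prod_range_succ' _ (m + 1), blockIndex_map_succ]

lemma blockProd_insert_zero_map_succ_zero :
    blockProd σ p (m + 1) (insert 0 (S.map (addRightEmbedding 1))) 0 ω = σ (p 0) ω := by
  simp [blockProd, prod_range_succ' _ (m + 1), blockIndex_insert_zero_map_succ]

lemma blockProd_insert_zero_map_succ_succ (i : ℕ) :
    blockProd σ p (m + 1) (insert 0 (S.map (addRightEmbedding 1))) (i + 1) ω =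
      blockProd σ (fun j => p (j + 1)) m S i ω := by
  simp [blockProd, prod_range_succ' _ (m + 1), blockIndex_insert_zero_map_succ]

lemma abs_blockProd_le_one (i : ℕ) (h : ∀ x, |σ x ω| ≤ 1) : |blockProd σ p m S i ω| ≤ 1 := by
  rw [blockProd, abs_prod]
  refine prod_le_one (fun _ _ => abs_nonneg _) fun j _ => ?_
  split_ifs
  exacts [h _, abs_one.le]

lemma integrable_blockProd [MeasurableSpace Ω] (P : Measure Ω) [IsFiniteMeasure P]
    (hσ : ∀ x, Measurable (σ x)) (hb : ∀ᵐ ω ∂P, ∀ x, |σ x ω| ≤ 1) (i : ℕ) :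
    Integrable (blockProd σ p m S i) P := by
  refine .of_bound (Finset.measurable_prod _ fun j _ => ?_).aestronglyMeasurable 1 ?_
  · split_ifs
    exacts [hσ _, measurable_const]
  · filter_upwards [hb] with ω h using abs_blockProd_le_one σ p m S ω i h

end BlockProd

section BlockExpansion

variable {ι Ω : Type*} [MeasurableSpace Ω] (P : Measure Ω) (σ : ι → Ω → ℝ) (p : ℕ → ι) (m : ℕ)

noncomputable def blockExpansion (ω : Ω) : ℝ :=
  ∑ S ∈ (range m).powerset, (-1) ^ #S * blockProd σ p m S 0 ω *
    ∏ i ∈ range #S, ∫ ω', blockProd σ p m S (i + 1) ω' ∂P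

lemma integral_blockExpansion [IsFiniteMeasure P] (hσ : ∀ x, Measurable (σ x))
    (hb : ∀ᵐ ω ∂P, ∀ x, |σ x ω| ≤ 1) :
    ∫ ω, blockExpansion P σ p m ω ∂P = ∑ S ∈ (range m).powerset,
      (-1) ^ #S * ∏ i ∈ range (#S + 1), ∫ ω, blockProd σ p m S i ω ∂P := by
  simp only [blockExpansion]
  rw [integral_finsetSum _ fun S _ =>
    ((integrable_blockProd σ p m S P hσ hb 0).const_mul _).mul_const _]
  refine sum_congr rfl fun S _ => ?_
  rw [integral_mul_const, integral_const_mul, prod_range_succ']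
  ring

end BlockExpansion

section NestedAlternation

variable {d : ℕ} {Ω : Type*} [MeasurableSpace Ω] (P : Measure Ω) (σ : V d → Ω → ℝ)

lemma nestFn_cons_of_ne_nil (x : V d) {l : List (V d)} (hl : l ≠ []) (ω : Ω) :
    nestFn P σ (x :: l) ω = σ x ω * (nestFn P σ l ω - ∫ ω', nestFn P σ l ω' ∂P) := by
  cases l
  · contradiction
  · rfl

theorem nestFn_map_range [IsFiniteMeasure P] (hσ : ∀ x, Measurable (σ x))
    (hb : ∀ᵐ ω ∂P, ∀ x, |σ x ω| ≤ 1) (m : ℕ) (p : ℕ → V d) :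
    nestFn P σ ((List.range (m + 1)).map p) = blockExpansion P σ p m := by
  induction m generalizing p with
  | zero =>
    ext ω
    simp [nestFn, blockExpansion, blockProd]
  | succ m ih =>
    ext ω
    have hcons : (List.range (m + 2)).map p =
        p 0 :: (List.range (m + 1)).map (fun j => p (j + 1)) := by
      simp [List.range_succ_eq_map, Function.comp_def]
    rw [hcons, nestFn_cons_of_ne_nil P σ _ (by simp), ih, integral_blockExpansion P _ _ _ hσ hb]
    simp only [blockExpansion]
    rw [sum_powerset_range_succ, mul_sub, mul_sum, mul_sum, ← sum_sub_distrib]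
    -- `S.map (· + 1)`: `x_0` joins the first block (the identity part of the outer `I - E`);
    -- `insert 0 (S.map (· + 1))`: `x_0` is a block of its own (the `-E` part).
    refine sum_congr rfl fun S _ => ?_
    simp only [card_map, card_insert_of_notMem (show 0 ∉ S.map (addRightEmbedding 1) by simp),
      blockProd_map_succ_zero, blockProd_map_succ_succ, blockProd_insert_zero_map_succ_zero,
      blockProd_insert_zero_map_succ_succ, prod_range_succ' _ #S]
    ring

end NestedAlternation

section IndependentCopies

variable {Ω κ β : Type*} [MeasurableSpace Ω] (P : Measure Ω)

theorem prod_integral_prod_ite_eq_integral_pi [Fintype κ] [DecidableEq κ] [SigmaFinite P]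
    (J : Finset β) (c : β → κ) (g : β → Ω → ℝ) :
    ∏ i, ∫ ω, (∏ j ∈ J, if c j = i then g j ω else 1) ∂P =
      ∫ ω : κ → Ω, ∏ j ∈ J, g j (ω (c j)) ∂Measure.pi fun _ => P := by
  rw [← integral_fintype_prod_eq_prod]
  congr with ω
  rw [Finset.prod_comm]
  simp [prod_ite_eq]

def blockFin (S : Finset ℕ) (j : ℕ) : Fin (#S + 1) :=
  ⟨blockIndex S j, Nat.lt_succ_of_le (blockIndex_le_card S j)⟩

theorem Wnest_map_range {d : ℕ} [IsFiniteMeasure P] (σ : V d → Ω → ℝ)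
    (hσ : ∀ x, Measurable (σ x)) (hb : ∀ᵐ ω ∂P, ∀ x, |σ x ω| ≤ 1) (m : ℕ) (p : ℕ → V d) :
    Wnest P σ ((List.range (m + 1)).map p) =
      ∑ S ∈ (range m).powerset, (-1) ^ #S *
        ∫ ω : Fin (#S + 1) → Ω, ∏ j ∈ range (m + 1), σ (p j) (ω (blockFin S j))
          ∂Measure.pi fun _ => P := by
  rw [Wnest, nestFn_map_range P σ hσ hb, integral_blockExpansion P σ p m hσ hb]
  refine sum_congr rfl fun S _ => ?_
  rw [← prod_integral_prod_ite_eq_integral_pi, ← Fin.prod_univ_eq_prod_range]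
  simp [blockProd, blockFin, Fin.ext_iff]

end IndependentCopies

section BoxPaths

variable {ι α : Type*} [Fintype ι] [DecidableEq ι]

noncomputable def boxPaths (X : Set (ι → α)) (G : Finset α) : Finset X :=
  (Fintype.piFinset fun _ => G).preimage Subtype.val Subtype.val_injective.injOn

@[simp] lemma mem_boxPaths {X : Set (ι → α)} {G : Finset α} {y : X} :
    y ∈ boxPaths X G ↔ ∀ k, (y : ι → α) k ∈ G := by
  simp [boxPaths]

lemma tendsto_boxPaths_atTop [DecidableEq α] (X : Set (ι → α)) :
    Tendsto (boxPaths X) atTop atTop :=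
  tendsto_atTop_atTop_of_monotone (fun _ _ hG y => by simpa using fun hy k => hG (hy k))
    fun s => ⟨s.biUnion fun y => univ.image y.1, fun y hy =>
      mem_boxPaths.2 fun k => mem_biUnion.2 ⟨y, hy, mem_image_of_mem _ (mem_univ k)⟩⟩

theorem norm_tsum_le_of_eventually_boxPaths [DecidableEq α] {E : Type*} [NormedAddCommGroup E]
    {X : Set (ι → α)} {g : X → E} {C : ℝ} (hC : 0 ≤ C)
    (h : ∀ᶠ G in atTop, ‖∑ y ∈ boxPaths X G, g y‖ ≤ C) : ‖∑' y, g y‖ ≤ C := by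
  by_cases hg : Summable g
  · exact le_of_tendsto (hg.hasSum.comp (tendsto_boxPaths_atTop X)).norm h
  · simpa [tsum_eq_zero_of_not_summable hg] using hC

end BoxPaths

section PathSums

variable {d n : ℕ} {x0 xn : V d}

def pathWeight (Kc : Fin n → V d → ℂ) (x0 xn : V d) (y : Fin (n - 1) → V d) : ℂ :=
  ∏ j : Fin n, Kc j (fullPath n x0 xn y j - fullPath n x0 xn y (j + 1))

lemma fullPath_zero (y : Fin (n - 1) → V d) : fullPath n x0 xn y 0 = x0 := rfl

lemma fullPath_succ_of_lt (y : Fin (n - 1) → V d) {j : ℕ} (hj : j + 1 < n) :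
    fullPath n x0 xn y (j + 1) = y ⟨j, by omega⟩ := by
  simp [fullPath, hj]

lemma fullPath_succ_mem {G : Finset (V d)} (hxn : xn ∈ G) {y : Fin (n - 1) → V d}
    (hy : ∀ k, y k ∈ G) (j : ℕ) : fullPath n x0 xn y (j + 1) ∈ G := by
  unfold fullPath
  split_ifs <;> simp_all

variable {Kc : Fin n → V d → ℂ} {X : Set (Fin (n - 1) → V d)} {M : ℝ}
  {G : Finset (V d)}

theorem norm_sum_boxPaths_mul_prod_le
    (hM : ∀ b : Fin n → V d → ℂ, (∀ j x, ‖b j x‖ ≤ 1) →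
      ‖Tn n (fun j x y => Kc j (x - y) * b j y) X x0 xn‖ ≤ M)
    (hxn : xn ∈ G) (τ : ℕ → V d → ℂ) (hτ : ∀ j z, ‖τ j z‖ ≤ 1) :
    ‖∑ y ∈ boxPaths X G,
        pathWeight Kc x0 xn y * ∏ j ∈ range (n + 1), τ j (fullPath n x0 xn y j)‖ ≤ M := by
  classical
  -- vanishing off `G`, these multipliers cut `T^n_X` down to the paths in the box
  set b : Fin n → V d → ℂ := fun j z => if z ∈ G then τ (j + 1) z else 0
  have hb : ∀ j z, ‖b j z‖ ≤ 1 := fun j z => by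
    unfold b
    split_ifs
    exacts [hτ _ _, by simp]
  have hTn : Tn n (fun j x y => Kc j (x - y) * b j y) X x0 xn = ∑ y ∈ boxPaths X G,
      pathWeight Kc x0 xn y * ∏ j : Fin n, τ (j + 1) (fullPath n x0 xn y (j + 1)) := by
    rw [Tn, tsum_eq_sum]
    · refine sum_congr rfl fun y hy => ?_
      rw [pathWeight, ← prod_mul_distrib]
      refine prod_congr rfl fun j _ => ?_
      simp [b, fullPath_succ_mem hxn (mem_boxPaths.1 hy)]
    · intro y hy
      obtain ⟨k, hk⟩ : ∃ k, (y : Fin (n - 1) → V d) k ∉ G := by simpa using hy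
      refine prod_eq_zero (mem_univ ⟨k, by omega⟩) ?_
      simp [b, fullPath_succ_of_lt _ (show k.val + 1 < n by omega), hk]
  have hsplit : ∀ y : Fin (n - 1) → V d, ∏ j ∈ range (n + 1), τ j (fullPath n x0 xn y j) =
      τ 0 x0 * ∏ j : Fin n, τ (j + 1) (fullPath n x0 xn y (j + 1)) := fun y => by
    rw [prod_range_succ', fullPath_zero, mul_comm,
      Fin.prod_univ_eq_prod_range (fun j => τ (j + 1) (fullPath n x0 xn y (j + 1)))]
  simp_rw [hsplit, mul_left_comm _ (τ 0 x0), ← mul_sum, ← hTn, norm_mul]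
  exact (mul_le_of_le_one_left (norm_nonneg _) (hτ 0 x0)).trans (hM b hb)

end PathSums

section Transfer

variable {d n : ℕ} {x0 xn : V d} {Kc : Fin n → V d → ℂ} {X : Set (Fin (n - 1) → V d)} {M : ℝ}
  {G : Finset (V d)}

theorem norm_sum_boxPaths_mul_integral_le {Ω : Type*} [MeasurableSpace Ω] (Q : Measure Ω)
    [IsProbabilityMeasure Q]
    (hM : ∀ b : Fin n → V d → ℂ, (∀ j x, ‖b j x‖ ≤ 1) →
      ‖Tn n (fun j x y => Kc j (x - y) * b j y) X x0 xn‖ ≤ M)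
    (hxn : xn ∈ G) (τ : ℕ → V d → Ω → ℝ) (hτm : ∀ j z, Measurable (τ j z))
    (hτ : ∀ᵐ ω ∂Q, ∀ j z, |τ j z ω| ≤ 1) :
    ‖∑ y ∈ boxPaths X G, pathWeight Kc x0 xn y *
        ((∫ ω, ∏ j ∈ range (n + 1), τ j (fullPath n x0 xn y j) ω ∂Q : ℝ) : ℂ)‖ ≤ M := by
  have hint : ∀ y : Fin (n - 1) → V d,
      Integrable (fun ω => ∏ j ∈ range (n + 1), τ j (fullPath n x0 xn y j) ω) Q := fun y =>
    .of_bound (Finset.measurable_prod _ fun j _ => hτm _ _).aestronglyMeasurable 1 <| by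
      filter_upwards [hτ] with ω h
      rw [Real.norm_eq_abs, abs_prod]
      exact prod_le_one (fun _ _ => abs_nonneg _) fun j _ => h _ _
  have hswap : ∑ y ∈ boxPaths X G, pathWeight Kc x0 xn y *
        ((∫ ω, ∏ j ∈ range (n + 1), τ j (fullPath n x0 xn y j) ω ∂Q : ℝ) : ℂ) =
      ∫ ω, ∑ y ∈ boxPaths X G, pathWeight Kc x0 xn y *
        ((∏ j ∈ range (n + 1), τ j (fullPath n x0 xn y j) ω : ℝ) : ℂ) ∂Q := by
    rw [integral_finsetSum]
    · simp_rw [integral_const_mul, integral_complex_ofReal]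
    · exact fun y _ => (hint y).ofReal.const_mul _
  rw [hswap]
  refine (norm_integral_le_of_norm_le_const (C := M) ?_).trans_eq (by simp)
  filter_upwards [hτ] with ω h
  simp only [Complex.ofReal_prod]
  exact norm_sum_boxPaths_mul_prod_le hM hxn (fun j z => (τ j z ω : ℂ)) fun j z => by
    rw [Complex.norm_real, Real.norm_eq_abs]
    exact h j z

theorem norm_sum_boxPaths_mul_Wnest_le {Ω : Type*} [MeasurableSpace Ω] (P : Measure Ω)
    [IsProbabilityMeasure P] (σ : V d → Ω → ℝ) (hσ : ∀ x, Measurable (σ x))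
    (hb : ∀ᵐ ω ∂P, ∀ x, |σ x ω| ≤ 1)
    (hM : ∀ b : Fin n → V d → ℂ, (∀ j x, ‖b j x‖ ≤ 1) →
      ‖Tn n (fun j x y => Kc j (x - y) * b j y) X x0 xn‖ ≤ M)
    (hxn : xn ∈ G) :
    ‖∑ y ∈ boxPaths X G, pathWeight Kc x0 xn y *
        ((Wnest P σ ((List.range (n + 1)).map (fullPath n x0 xn y)) : ℝ) : ℂ)‖ ≤ 2 ^ n * M := by
  simp_rw [Wnest_map_range P σ hσ hb, Complex.ofReal_sum, mul_sum]
  rw [Finset.sum_comm]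
  calc _ ≤ ∑ S ∈ (range n).powerset, M := norm_sum_le_of_le _ fun S _ => ?_
    _ = 2 ^ n * M := by simp
  simp_rw [Complex.ofReal_mul, mul_left_comm (pathWeight Kc x0 xn _), ← mul_sum, norm_mul]
  refine (mul_le_of_le_one_left (norm_nonneg _) (by simp)).trans ?_
  refine norm_sum_boxPaths_mul_integral_le (Measure.pi fun _ => P) hM hxn
    (fun j z ω => σ z (ω (blockFin S j))) (fun j z => (hσ z).comp (measurable_pi_apply _)) ?_
  filter_upwards [ae_all_iff.2 fun i : Fin (#S + 1) =>
    (Measure.tendsto_eval_ae_ae (i := i)).eventually hb]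
    with ω h j z using h (blockFin S j) z

end Transfer

theorem transfer_lemma_general (d n : ℕ)
    (Ω : Type*) [MeasurableSpace Ω] (P : MeasureTheory.Measure Ω)
    [MeasureTheory.IsProbabilityMeasure P]
    (σ : V d → Ω → ℝ) (hmeas : ∀ x, Measurable (σ x))
    (hbdd : ∀ x, ∀ᵐ ω ∂P, |σ x ω| ≤ 1)
    (idx : Fin n → Fin d × Fin d)
    (X : Set (Fin (n - 1) → V d))
    (M : V d → V d → ℝ) (hMpos : ∀ x y, 0 ≤ M x y)
    (hM : ∀ b : Fin n → V d → ℂ, (∀ j x, ‖b j x‖ ≤ 1) →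
      ∀ x0 xn : V d, ‖Tn n (sioK n idx b) X x0 xn‖ ≤ M x0 xn) :
    ∀ x0 xn : V d,
      ‖fX P σ n (fun j => sioKernel d (idx j).1 (idx j).2) X x0 xn‖ ≤
        2 ^ n * M x0 xn := by
  intro x0 xn
  refine norm_tsum_le_of_eventually_boxPaths (mul_nonneg (by positivity) (hMpos x0 xn)) ?_
  filter_upwards [eventually_ge_atTop {xn}] with G hG
  exact norm_sum_boxPaths_mul_Wnest_le P σ hmeas (ae_all_iff.2 hbdd) (fun b hb => hM b hb x0 xn)
    (hG (mem_singleton_self xn))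

/-- Lemma 3.1: transfer of deterministic bounds on `T^n_X` to the random
quantity `f_X`, at the cost of a factor `2^n`. -/
theorem transfer_lemma (d n : ℕ) (hd : 3 ≤ d) (hn : 1 ≤ n)
    (Ω : Type*) [MeasurableSpace Ω] (P : MeasureTheory.Measure Ω)
    [MeasureTheory.IsProbabilityMeasure P]
    (σ : V d → Ω → ℝ) (hmeas : ∀ x, Measurable (σ x))
    (hindep : ProbabilityTheory.iIndepFun σ P)
    (hident : ∀ x y, ProbabilityTheory.IdentDistrib (σ x) (σ y) P P)
    (hbdd : ∀ x, ∀ᵐ ω ∂P, |σ x ω| ≤ 1)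
    (idx : Fin n → Fin d × Fin d)
    (X : Set (Fin (n - 1) → V d))
    (M : V d → V d → ℝ) (hMpos : ∀ x y, 0 ≤ M x y)
    (hM : ∀ b : Fin n → V d → ℂ, (∀ j x, ‖b j x‖ ≤ 1) →
      ∀ x0 xn : V d, ‖Tn n (sioK n idx b) X x0 xn‖ ≤ M x0 xn) :
    ∀ x0 xn : V d,
      ‖fX P σ n (fun j => sioKernel d (idx j).1 (idx j).2) X x0 xn‖ ≤
        2 ^ n * M x0 xn :=
  transfer_lemma_general d n Ω P σ hmeas hbdd idx X M hMpos hM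
end

section
/- Let n ≥ 1 and x_0, x_1, …, x_n ∈ ℤ^d. If there exists 0 ≤ j < n with {x_0,…,x_j} ∩ {x_{j+1},…,x_n} = ∅, then W(x_0,x_1,…,x_n) = 0. Consequently, for every n ≥ 3, distinct x_0, x_n ∈ ℤ^d, every m ≥ 0 and 0 ≤ j_0 < n, and every choice of K_1,…,K_n of the form ∇_i(−Δ)^{−1}∇_{i'}^*, one has f_{S̃^m_{j_0}}(x_0,x_n) = f_{S^m_{j_0}}(x_0,x_n). -/
open MeasureTheory ProbabilityTheory
open scoped ENNReal NNReal BigOperators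

/-! At a split point `j` the nested expression factors as `∏_{a ≤ j} σ(x_a)` times the centred
variable `(I−E)[σ(x_{j+1})·(I−E)[⋯]]`. When the two blocks of sites are disjoint these factors
are independent, and the second has mean zero, so `W` vanishes. Paths in `S^m_{j_0} \ S̃^m_{j_0}`
split at `j_0` in this way, so they contribute nothing to `f_{S^m_{j_0}}`. -/

section SiteIndependence

variable {Ω ι β : Type*} [MeasurableSpace β]

abbrev sitesAlgebra (f : ι → Ω → β) (S : Finset ι) : MeasurableSpace Ω :=
  MeasurableSpace.comap (fun ω (i : S) => f i ω) inferInstance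

lemma measurable_sitesAlgebra_apply (f : ι → Ω → β) {S : Finset ι} {i : ι} (hi : i ∈ S) :
    Measurable[sitesAlgebra f S] (f i) :=
  (measurable_pi_apply (⟨i, hi⟩ : S)).comp (comap_measurable (fun ω (i : S) => f i ω))

variable [MeasurableSpace Ω]

lemma sitesAlgebra_le {f : ι → Ω → β} (hf : ∀ i, Measurable (f i)) (S : Finset ι) :
    sitesAlgebra f S ≤ ‹MeasurableSpace Ω› :=
  (measurable_pi_lambda _ fun i : S => hf i).comap_le

lemma ProbabilityTheory.iIndepFun.indepFun_of_measurable_sitesAlgebra {μ : Measure Ω}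
    {f : ι → Ω → β} (hf : iIndepFun f μ) (hf_meas : ∀ i, Measurable (f i))
    {S T : Finset ι} (hST : Disjoint S T) {g h : Ω → ℝ}
    (hg : Measurable[sitesAlgebra f S] g) (hh : Measurable[sitesAlgebra f T] h) :
    IndepFun g h μ := by
  have hST_indep := (IndepFun_iff_Indep _ _ _).1 (hf.indepFun_finset S T hST hf_meas)
  exact (IndepFun_iff_Indep _ _ _).2 <|
    indep_of_indep_of_le_left (indep_of_indep_of_le_right hST_indep hh.comap_le) hg.comap_le

end SiteIndependence

lemma ProbabilityTheory.IndepFun.integral_mul_sub_integral_eq_zero {Ω : Type*}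
    [MeasurableSpace Ω] {μ : Measure Ω} [IsZeroOrProbabilityMeasure μ] {X Y : Ω → ℝ}
    (hXY : IndepFun X Y μ) (hX : AEStronglyMeasurable X μ) (hY : AEStronglyMeasurable Y μ) :
    ∫ ω, X ω * (Y ω - ∫ ω', Y ω' ∂μ) ∂μ = 0 := by
  have hcentred : ∫ ω, (Y ω - ∫ ω', Y ω' ∂μ) ∂μ = 0 := by
    simpa [centralMoment] using centralMoment_one (X := Y) (μ := μ)
  have hindep : IndepFun X (fun ω => Y ω - ∫ ω', Y ω' ∂μ) μ :=
    hXY.comp measurable_id (measurable_id.sub_const _)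
  have := hindep.integral_mul_eq_mul_integral hX (hY.sub aestronglyMeasurable_const)
  simpa only [Pi.mul_apply, hcentred, mul_zero] using this

section Nested

variable {Ω : Type*} {d : ℕ} (σ : V d → Ω → ℝ)

lemma measurable_sitesAlgebra_prod {A : Finset (V d)} {l : List (V d)} (h : ∀ v ∈ l, v ∈ A) :
    Measurable[sitesAlgebra σ A] (l.map σ).prod :=
  List.measurable_prod _ fun _ hf => by
    obtain ⟨v, hv, rfl⟩ := List.mem_map.1 hf
    exact measurable_sitesAlgebra_apply σ (h v hv)

variable [MeasurableSpace Ω] (P : Measure Ω)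

lemma measurable_sitesAlgebra_nestFn (A : Finset (V d)) :
    ∀ l : List (V d), (∀ v ∈ l, v ∈ A) → Measurable[sitesAlgebra σ A] (nestFn P σ l)
  | [], _ => measurable_const
  | [x], h => measurable_sitesAlgebra_apply σ (h x List.mem_cons_self)
  | x :: y :: l, h =>
    (measurable_sitesAlgebra_apply σ (h x List.mem_cons_self)).mul
      ((measurable_sitesAlgebra_nestFn A (y :: l) fun v hv =>
        h v (List.mem_cons_of_mem _ hv)).sub_const _)

variable [IsZeroOrProbabilityMeasure P] {σ} (hmeas : ∀ x, Measurable (σ x))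
  (hindep : iIndepFun σ P)
include hmeas hindep

lemma integral_prod_mul_centred_nestFn_eq_zero {l₁ l₂ : List (V d)}
    (hdisj : ∀ a ∈ l₁, ∀ b ∈ l₂, a ≠ b) :
    ∫ ω, (l₁.map σ).prod ω * (nestFn P σ l₂ ω - ∫ ω', nestFn P σ l₂ ω' ∂P) ∂P = 0 := by
  classical
  have hST : Disjoint l₁.toFinset l₂.toFinset :=
    Finset.disjoint_left.2 fun a ha hb =>
      hdisj a (List.mem_toFinset.1 ha) a (List.mem_toFinset.1 hb) rfl
  have hprod := measurable_sitesAlgebra_prod σ (l := l₁) fun v hv => List.mem_toFinset.2 hv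
  have hnest := measurable_sitesAlgebra_nestFn σ P _ l₂ fun v hv => List.mem_toFinset.2 hv
  exact IndepFun.integral_mul_sub_integral_eq_zero
    (hindep.indepFun_of_measurable_sitesAlgebra hmeas hST hprod hnest)
    (hprod.mono (sitesAlgebra_le hmeas _) le_rfl).aestronglyMeasurable
    (hnest.mono (sitesAlgebra_le hmeas _) le_rfl).aestronglyMeasurable

lemma nestFn_append {l₁ l₂ : List (V d)} (h₁ : l₁ ≠ []) (h₂ : l₂ ≠ [])
    (hdisj : ∀ a ∈ l₁, ∀ b ∈ l₂, a ≠ b) :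
    ∀ ω, nestFn P σ (l₁ ++ l₂) ω =
      (l₁.map σ).prod ω * (nestFn P σ l₂ ω - ∫ ω', nestFn P σ l₂ ω' ∂P) := by
  induction l₁ with
  | nil => exact absurd rfl h₁
  | cons v rest ih =>
    intro ω
    obtain ⟨w, t, rfl⟩ := List.exists_cons_of_ne_nil h₂
    cases rest with
    | nil => simp [nestFn]
    | cons u rest' =>
      have hdisj' : ∀ a ∈ u :: rest', ∀ b ∈ w :: t, a ≠ b := fun a ha =>
        hdisj a (List.mem_cons_of_mem _ ha)
      have htail := ih (List.cons_ne_nil _ _) hdisj'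
      have hmean : ∫ ω', nestFn P σ (u :: rest' ++ w :: t) ω' ∂P = 0 := by
        simp_rw [htail]
        exact integral_prod_mul_centred_nestFn_eq_zero P hmeas hindep hdisj'
      rw [List.cons_append, List.cons_append, nestFn, ← List.cons_append, hmean]
      beta_reduce
      rw [sub_zero, htail ω]
      simp only [List.map_cons, List.prod_cons, Pi.mul_apply, mul_assoc]

lemma Wnest_append_eq_zero {l₁ l₂ : List (V d)} (h₁ : l₁ ≠ []) (h₂ : l₂ ≠ [])
    (hdisj : ∀ a ∈ l₁, ∀ b ∈ l₂, a ≠ b) : Wnest P σ (l₁ ++ l₂) = 0 := by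
  simp_rw [Wnest, nestFn_append P hmeas hindep h₁ h₂ hdisj]
  exact integral_prod_mul_centred_nestFn_eq_zero P hmeas hindep hdisj

lemma Wnest_map_range_eq_zero {n j : ℕ} (hj : j < n) {x : ℕ → V d}
    (hdisj : ∀ a, a ≤ j → ∀ b, j < b → b ≤ n → x a ≠ x b) :
    Wnest P σ ((List.range (n + 1)).map x) = 0 := by
  have hsplit : (List.range (n + 1)).map x =
      (List.range (j + 1)).map x ++ (List.range (n - j)).map fun k => x (j + 1 + k) := by
    rw [show n + 1 = j + 1 + (n - j) by omega, List.range_add, List.map_append, List.map_map]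
    rfl
  rw [hsplit]
  refine Wnest_append_eq_zero P hmeas hindep (by simp) (by simp; omega) ?_
  simp only [List.mem_map, List.mem_range]
  rintro _ ⟨a, ha, rfl⟩ _ ⟨k, hk, rfl⟩
  exact hdisj a (by omega) _ (by omega) (by omega)

end Nested

lemma fX_eq_of_subset_of_Wnest_eq_zero {Ω : Type*} [MeasurableSpace Ω] {d : ℕ}
    (P : Measure Ω) (σ : V d → Ω → ℝ) (n : ℕ) (Kc : Fin n → V d → ℂ)
    {X Y : Set (Fin (n - 1) → V d)} (x0 xn : V d) (hXY : X ⊆ Y)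
    (hW : ∀ y ∈ Y, y ∉ X →
      Wnest P σ ((List.range (n + 1)).map (fullPath n x0 xn y)) = 0) :
    fX P σ n Kc X x0 xn = fX P σ n Kc Y x0 xn := by
  set F : (Fin (n - 1) → V d) → ℂ := fun y =>
    (∏ j : Fin n, Kc j (fullPath n x0 xn y j - fullPath n x0 xn y (j + 1))) *
      (Wnest P σ ((List.range (n + 1)).map (fullPath n x0 xn y)) : ℂ)
  have hfX : ∀ Z, fX P σ n Kc Z x0 xn = ∑' y, Z.indicator F y := fun Z => tsum_subtype Z F
  rw [hfX, hfX]
  congr 1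
  funext y
  by_cases hyX : y ∈ X
  · rw [Set.indicator_of_mem hyX, Set.indicator_of_mem (hXY hyX)]
  by_cases hyY : y ∈ Y
  · rw [Set.indicator_of_notMem hyX, Set.indicator_of_mem hyY]
    simp [F, hW y hyY hyX]
  · rw [Set.indicator_of_notMem hyX, Set.indicator_of_notMem hyY]

theorem vanishing_on_reducible_paths_general (d : ℕ)
    (Ω : Type*) [MeasurableSpace Ω] (P : MeasureTheory.Measure Ω)
    [MeasureTheory.IsProbabilityMeasure P]
    (σ : V d → Ω → ℝ) (hmeas : ∀ x, Measurable (σ x))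
    (hindep : ProbabilityTheory.iIndepFun σ P) :
    -- the vanishing property for reducible paths
    (∀ n : ℕ, 1 ≤ n → ∀ x : ℕ → V d,
      (∃ j, j < n ∧ ∀ a, a ≤ j → ∀ b, j < b → b ≤ n → x a ≠ x b) →
      Wnest P σ ((List.range (n + 1)).map x) = 0) ∧
    -- consequently `f_{S̃^m_{j_0}} = f_{S^m_{j_0}}`
    (∀ n : ℕ, 3 ≤ n → ∀ x0 xn : V d, x0 ≠ xn → ∀ m j0 : ℕ, j0 < n →
      ∀ idx : Fin n → Fin d × Fin d,
        fX P σ n (fun j => sioKernel d (idx j).1 (idx j).2)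
            (StildeSet n x0 xn m j0) x0 xn =
          fX P σ n (fun j => sioKernel d (idx j).1 (idx j).2)
            (Sset n x0 xn m j0) x0 xn) := by
  refine ⟨fun n _ x ⟨j, hj, hdisj⟩ => Wnest_map_range_eq_zero P hmeas hindep hj hdisj, ?_⟩
  intro n _ x0 xn _ m j0 hj0 idx
  refine fX_eq_of_subset_of_Wnest_eq_zero P σ n _ x0 xn (fun y hy => hy.1) fun y hyS hyT => ?_
  refine Wnest_map_range_eq_zero P hmeas hindep hj0 fun a ha b hb hbn heq => ?_
  exact hyT ⟨hyS, a, ha, b, hb, hbn, heq⟩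

/-- vanishing on reducible paths, and Lemma 3.3: `W(x_0,…,x_n) = 0` for
reducible paths, hence `f_{S̃^m_{j_0}} = f_{S^m_{j_0}}`. -/
theorem vanishing_on_reducible_paths (d : ℕ) (hd : 1 ≤ d)
    (Ω : Type*) [MeasurableSpace Ω] (P : MeasureTheory.Measure Ω)
    [MeasureTheory.IsProbabilityMeasure P]
    (σ : V d → Ω → ℝ) (hmeas : ∀ x, Measurable (σ x))
    (hindep : ProbabilityTheory.iIndepFun σ P)
    (hident : ∀ x y, ProbabilityTheory.IdentDistrib (σ x) (σ y) P P)
    (hbdd : ∀ x, ∀ᵐ ω ∂P, |σ x ω| ≤ 1) :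
    -- the vanishing property for reducible paths
    (∀ n : ℕ, 1 ≤ n → ∀ x : ℕ → V d,
      (∃ j, j < n ∧ ∀ a, a ≤ j → ∀ b, j < b → b ≤ n → x a ≠ x b) →
      Wnest P σ ((List.range (n + 1)).map x) = 0) ∧
    -- consequently `f_{S̃^m_{j_0}} = f_{S^m_{j_0}}`
    (∀ n : ℕ, 3 ≤ n → ∀ x0 xn : V d, x0 ≠ xn → ∀ m j0 : ℕ, j0 < n →
      ∀ idx : Fin n → Fin d × Fin d,
        fX P σ n (fun j => sioKernel d (idx j).1 (idx j).2)
            (StildeSet n x0 xn m j0) x0 xn =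
          fX P σ n (fun j => sioKernel d (idx j).1 (idx j).2)
            (Sset n x0 xn m j0) x0 xn) :=
  vanishing_on_reducible_paths_general d Ω P σ hmeas hindep
end

section
/- Let d ≥ 1 and ε > 0, and let α, β be real numbers with 3d/4 ≤ α ≤ d − ε and 3d/4 ≤ β ≤ d − ε. Then there exists a constant C, depending only on d, such that for all a, b ∈ ℤ^d: Σ_{x∈ℤ^d} ⟨a−x⟩^{−α} ⟨x−b⟩^{−β} ≤ C ε^{−1} ⟨a−b⟩^{−(α+β−d)}. -/
open MeasureTheory ProbabilityTheory
open scoped ENNReal NNReal BigOperators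

/-!
Put `c = a - b` and `y = x - b`. By symmetry (`y ↦ c - y` swaps `α` and `β`) it suffices to sum
over the half `⟨y⟩ ≤ ⟨c - y⟩`, where the triangle inequality gives `⟨c - y⟩ ≥ ⟨c⟩ / 2`. There the
part `⟨y⟩ ≤ ⟨c⟩` is at most `(⟨c⟩/2)^{-α} ∑_{⟨y⟩ ≤ ⟨c⟩} ⟨y⟩^{-β}` and the part `⟨y⟩ > ⟨c⟩` at most
`∑_{⟨y⟩ > ⟨c⟩} ⟨y⟩^{-(α+β)}`. Cutting both lattice sums into dyadic shells at scales `⟨c⟩ 2^{∓k}`,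
and counting at most `(2T)^d` points with `⟨y⟩ ≤ T`, turns them into geometric series of ratios
`2^{-(d-β)}` and `2^{-(α+β-d)}`. Both exponents are at least `ε`, and
`(1 - 2^{-t})⁻¹ ≤ 1 + 2/t` produces the factor `ε⁻¹`.
-/

lemma tsum_le_of_tsum_ofReal_le {ι : Type*} {f : ι → ℝ} {B : ℝ} (hf : ∀ i, 0 ≤ f i)
    (hB : 0 ≤ B) (h : ∑' i, ENNReal.ofReal (f i) ≤ ENNReal.ofReal B) : ∑' i, f i ≤ B := by
  calc ∑' i, f i = (∑' i, ENNReal.ofReal (f i)).toReal := by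
        rw [ENNReal.tsum_toReal_eq fun _ => ENNReal.ofReal_ne_top]
        simp [hf]
    _ ≤ B := ENNReal.toReal_le_of_le_ofReal hB h

lemma inv_one_sub_two_rpow_neg_le {t : ℝ} (ht : 0 < t) : (1 - (2 : ℝ) ^ (-t))⁻¹ ≤ 1 + 2 / t := by
  have hq : 1 + t / 2 ≤ (2 : ℝ) ^ t := by
    rw [Real.rpow_def_of_pos two_pos]
    nlinarith [Real.add_one_le_exp (Real.log 2 * t), Real.log_two_gt_d9]
  have hq1 : 0 < (2 : ℝ) ^ t - 1 := by linarith
  have hid : (1 - (2 : ℝ) ^ (-t))⁻¹ = 1 + 1 / ((2 : ℝ) ^ t - 1) := by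
    rw [Real.rpow_neg zero_le_two]
    field_simp
    ring
  rw [hid]
  gcongr 1 + ?_
  rw [div_le_div_iff₀ hq1 ht]
  linarith

section LatticeSums

variable {d : ℕ}

lemma znorm_eq_norm (x : V d) :
    znorm x = ‖(WithLp.toLp 2 fun i => (x i : ℝ) : EuclideanSpace ℝ (Fin d))‖ := by
  simp [znorm, EuclideanSpace.norm_eq]

lemma one_le_jap (x : V d) : 1 ≤ jap x :=
  le_add_of_nonneg_right (Real.sqrt_nonneg _)

lemma jap_pos (x : V d) : 0 < jap x :=
  zero_lt_one.trans_le (one_le_jap x)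

lemma jap_le_jap_add_jap_sub (c y : V d) : jap c ≤ jap y + jap (c - y) := by
  have h : znorm c ≤ znorm y + znorm (c - y) := by
    have hsplit : (WithLp.toLp 2 fun i => (c i : ℝ) : EuclideanSpace ℝ (Fin d)) =
        (WithLp.toLp 2 fun i => (y i : ℝ)) + WithLp.toLp 2 fun i => ((c - y) i : ℝ) := by
      ext i
      simp
    simp only [znorm_eq_norm, hsplit]
    exact norm_add_le _ _
  simp only [jap]
  linarith

lemma abs_le_znorm (x : V d) (i : Fin d) : |(x i : ℝ)| ≤ znorm x := by
  rw [znorm, ← Real.sqrt_sq_eq_abs]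
  exact Real.sqrt_le_sqrt
    (Finset.single_le_sum (fun j _ => sq_nonneg (x j : ℝ)) (Finset.mem_univ i))

lemma tsum_ite_jap_le_le (T : ℝ) :
    ∑' x : V d, (if jap x ≤ T then (1 : ℝ≥0∞) else 0) ≤ ENNReal.ofReal ((2 * T) ^ d) := by
  classical
  rcases lt_or_ge T 1 with hT | hT
  · simp [fun x : V d => not_le.mpr (hT.trans_le (one_le_jap x))]
  set N := ⌊T - 1⌋₊
  set box : Finset (V d) := Fintype.piFinset fun _ => Finset.Icc (-(N : ℤ)) N
  have hbox : ∀ x ∉ box, (if jap x ≤ T then (1 : ℝ≥0∞) else 0) = 0 := by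
    intro x hx
    refine if_neg fun hxT => hx (Fintype.mem_piFinset.mpr fun i => ?_)
    have hi : ((|x i| : ℤ) : ℝ) ≤ T - 1 := by
      have := abs_le_znorm x i
      simp only [jap] at hxT
      push_cast
      linarith
    have hiN : |x i| ≤ (N : ℤ) := by
      rw [Int.natCast_floor_eq_floor (by linarith)]
      exact Int.le_floor.mpr hi
    exact Finset.mem_Icc.mpr (abs_le.mp hiN)
  have hcard : (box.card : ℝ) ≤ (2 * T) ^ d := by
    have hN : (N : ℝ) ≤ T - 1 := Nat.floor_le (by linarith)
    simp only [box, Fintype.card_piFinset, Int.card_Icc, Finset.prod_const, Finset.card_univ,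
      Fintype.card_fin]
    have h2N : ((N : ℤ) + 1 - -(N : ℤ)).toNat = 2 * N + 1 := by omega
    rw [h2N]
    push_cast
    exact pow_le_pow_left₀ (by positivity) (by linarith) d
  calc ∑' x : V d, (if jap x ≤ T then (1 : ℝ≥0∞) else 0)
      = ∑ x ∈ box, (if jap x ≤ T then (1 : ℝ≥0∞) else 0) := tsum_eq_sum hbox
    _ ≤ ∑ _x ∈ box, (1 : ℝ≥0∞) := Finset.sum_le_sum fun x _ => by split_ifs <;> simp
    _ = ENNReal.ofReal (box.card : ℝ) := by simp
    _ ≤ ENNReal.ofReal ((2 * T) ^ d) := ENNReal.ofReal_le_ofReal hcard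

lemma tsum_le_tsum_of_shells (f : V d → ℝ≥0∞) (r : ℕ → ℝ) (c : ℕ → ℝ≥0∞)
    (h : ∀ x, f x ≠ 0 → ∃ k, jap x ≤ r k ∧ f x ≤ c k) :
    ∑' x, f x ≤ ∑' k, ENNReal.ofReal ((2 * r k) ^ d) * c k := by
  calc ∑' x, f x ≤ ∑' x, ∑' k, (if jap x ≤ r k then (1 : ℝ≥0∞) else 0) * c k := by
        refine ENNReal.tsum_le_tsum fun x => ?_
        by_cases hx : f x = 0
        · simp [hx]
        obtain ⟨k, hxk, hfk⟩ := h x hx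
        exact hfk.trans (le_of_eq_of_le (by simp [hxk]) (ENNReal.le_tsum k))
    _ = ∑' k, (∑' x : V d, if jap x ≤ r k then (1 : ℝ≥0∞) else 0) * c k := by
        rw [ENNReal.tsum_comm]
        simp only [ENNReal.tsum_mul_right]
    _ ≤ _ := ENNReal.tsum_le_tsum fun k => mul_le_mul_left (tsum_ite_jap_le_le _) _

lemma tsum_ofReal_mul_geometric {A ρ : ℝ} (hA : 0 ≤ A) (hρ₀ : 0 ≤ ρ) (hρ₁ : ρ < 1) :
    ∑' k : ℕ, ENNReal.ofReal (A * ρ ^ k) = ENNReal.ofReal (A / (1 - ρ)) := by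
  rw [← ENNReal.ofReal_tsum_of_nonneg (fun k => by positivity)
    ((summable_geometric_of_lt_one hρ₀ hρ₁).mul_left A), tsum_mul_left,
    tsum_geometric_of_lt_one hρ₀ hρ₁, div_eq_mul_inv]

lemma tsum_ite_jap_le_rpow_neg_le {β R : ℝ} (hβ : 0 ≤ β) (hβd : β < d) (hR : 0 < R) :
    ∑' x : V d, (if jap x ≤ R then ENNReal.ofReal (jap x ^ (-β)) else 0) ≤
      ENNReal.ofReal (2 ^ ((d : ℝ) + β) * R ^ ((d : ℝ) - β) / (1 - 2 ^ (β - d))) := by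
  have hshell : ∀ k : ℕ, (2 * (R / 2 ^ k)) ^ d * (R / 2 ^ (k + 1)) ^ (-β) =
      2 ^ ((d : ℝ) + β) * R ^ ((d : ℝ) - β) * ((2 : ℝ) ^ (β - d)) ^ k := fun k => by
    have hu : (0 : ℝ) < 2 ^ k := by positivity
    rw [← Real.rpow_mul_natCast zero_le_two, mul_comm _ (k : ℝ),
      Real.rpow_natCast_mul zero_le_two, pow_succ, Real.rpow_neg (by positivity),
      Real.div_rpow hR.le (by positivity), Real.mul_rpow hu.le zero_le_two,
      Real.rpow_add two_pos, Real.rpow_sub hR, Real.rpow_sub hu, Real.rpow_natCast,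
      Real.rpow_natCast, Real.rpow_natCast, mul_pow, div_pow]
    field_simp
  calc _ ≤ ∑' k : ℕ, ENNReal.ofReal ((2 * (R / 2 ^ k)) ^ d) *
        ENNReal.ofReal ((R / 2 ^ (k + 1)) ^ (-β)) := by
        refine tsum_le_tsum_of_shells _ _ _ fun x hx => ?_
        have hxR : jap x ≤ R := by
          by_contra h
          simp [h] at hx
        obtain ⟨k, hk, hk'⟩ :=
          exists_nat_pow_near ((one_le_div (jap_pos x)).mpr hxR) one_lt_two
        rw [le_div_iff₀ (jap_pos x), ← le_div_iff₀' (by positivity)] at hk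
        rw [div_lt_iff₀ (jap_pos x), ← div_lt_iff₀' (by positivity)] at hk'
        refine ⟨k, hk, ?_⟩
        rw [if_pos hxR]
        exact ENNReal.ofReal_le_ofReal
          (Real.rpow_le_rpow_of_nonpos (by positivity) hk'.le (neg_nonpos.mpr hβ))
    _ = ∑' k : ℕ, ENNReal.ofReal (2 ^ ((d : ℝ) + β) * R ^ ((d : ℝ) - β) *
        ((2 : ℝ) ^ (β - d)) ^ k) := by
        refine tsum_congr fun k => ?_
        rw [← hshell, ENNReal.ofReal_mul (by positivity)]
    _ = _ := tsum_ofReal_mul_geometric (by positivity) (by positivity)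
        (Real.rpow_lt_one_of_one_lt_of_neg one_lt_two (by linarith))

lemma tsum_ite_lt_jap_rpow_neg_le {s R : ℝ} (hs : d < s) (hR : 0 < R) :
    ∑' x : V d, (if R < jap x then ENNReal.ofReal (jap x ^ (-s)) else 0) ≤
      ENNReal.ofReal (4 ^ d * R ^ ((d : ℝ) - s) / (1 - 2 ^ ((d : ℝ) - s))) := by
  have hshell : ∀ k : ℕ, (2 * (2 ^ (k + 1) * R)) ^ d * (2 ^ k * R) ^ (-s) =
      4 ^ d * R ^ ((d : ℝ) - s) * ((2 : ℝ) ^ ((d : ℝ) - s)) ^ k := fun k => by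
    have hu : (0 : ℝ) < 2 ^ k := by positivity
    rw [← Real.rpow_mul_natCast zero_le_two, mul_comm _ (k : ℝ),
      Real.rpow_natCast_mul zero_le_two, pow_succ, Real.rpow_neg (by positivity),
      Real.mul_rpow hu.le hR.le, Real.rpow_sub hR, Real.rpow_sub hu, Real.rpow_natCast,
      Real.rpow_natCast]
    field_simp
    ring
  calc _ ≤ ∑' k : ℕ, ENNReal.ofReal ((2 * (2 ^ (k + 1) * R)) ^ d) *
        ENNReal.ofReal ((2 ^ k * R) ^ (-s)) := by
        refine tsum_le_tsum_of_shells _ _ _ fun x hx => ?_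
        have hxR : R < jap x := by
          by_contra h
          simp [h] at hx
        obtain ⟨k, hk, hk'⟩ :=
          exists_nat_pow_near ((one_le_div hR).mpr hxR.le) one_lt_two
        rw [le_div_iff₀ hR] at hk
        rw [div_lt_iff₀ hR] at hk'
        refine ⟨k, hk'.le, ?_⟩
        rw [if_pos hxR]
        exact ENNReal.ofReal_le_ofReal
          (Real.rpow_le_rpow_of_nonpos (by positivity) hk (neg_nonpos.mpr (d.cast_nonneg.trans hs.le)))
    _ = ∑' k : ℕ, ENNReal.ofReal (4 ^ d * R ^ ((d : ℝ) - s) *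
        ((2 : ℝ) ^ ((d : ℝ) - s)) ^ k) := by
        refine tsum_congr fun k => ?_
        rw [← hshell, ENNReal.ofReal_mul (by positivity)]
    _ = _ := tsum_ofReal_mul_geometric (by positivity) (by positivity)
        (Real.rpow_lt_one_of_one_lt_of_neg one_lt_two (by linarith))

noncomputable def convHalf (α β : ℝ) (c : V d) : ℝ≥0∞ :=
  ∑' y : V d, if jap y ≤ jap (c - y) then ENNReal.ofReal (jap (c - y) ^ (-α) * jap y ^ (-β)) else 0

lemma tsum_conv_le_convHalf_add (α β : ℝ) (c : V d) :
    ∑' y : V d, ENNReal.ofReal (jap (c - y) ^ (-α) * jap y ^ (-β)) ≤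
      convHalf α β c + convHalf β α c := by
  have hswap : convHalf β α c = ∑' y : V d,
      if jap (c - y) ≤ jap y then ENNReal.ofReal (jap y ^ (-β) * jap (c - y) ^ (-α)) else 0 := by
    rw [convHalf, ← (Equiv.subLeft c).tsum_eq]
    simp only [Equiv.subLeft_apply, sub_sub_cancel]
  rw [hswap, convHalf, ← ENNReal.tsum_add]
  refine ENNReal.tsum_le_tsum fun y => ?_
  rcases le_total (jap y) (jap (c - y)) with h | h
  · rw [if_pos h]
    exact le_self_add
  · rw [if_pos h, mul_comm]
    exact le_add_self

lemma convHalf_summand_le {α : ℝ} (β : ℝ) (hα : 0 ≤ α) (c y : V d) :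
    (if jap y ≤ jap (c - y) then ENNReal.ofReal (jap (c - y) ^ (-α) * jap y ^ (-β)) else 0) ≤
      ENNReal.ofReal ((jap c / 2) ^ (-α)) *
          (if jap y ≤ jap c then ENNReal.ofReal (jap y ^ (-β)) else 0) +
        (if jap c < jap y then ENNReal.ofReal (jap y ^ (-(α + β))) else 0) := by
  have hc := jap_pos c
  have hyβ : 0 ≤ jap y ^ (-β) := Real.rpow_nonneg (jap_pos y).le _
  split_ifs with hyc hyR hyR' hyR'
  · exact absurd hyR' (not_lt.mpr hyR)
  · rw [add_zero, ← ENNReal.ofReal_mul (by positivity)]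
    have hfar : jap c / 2 ≤ jap (c - y) := by linarith [jap_le_jap_add_jap_sub c y]
    exact ENNReal.ofReal_le_ofReal (mul_le_mul_of_nonneg_right
      (Real.rpow_le_rpow_of_nonpos (by positivity) hfar (neg_nonpos.mpr hα)) hyβ)
  · rw [mul_zero, zero_add, neg_add, Real.rpow_add (jap_pos y)]
    exact ENNReal.ofReal_le_ofReal (mul_le_mul_of_nonneg_right
      (Real.rpow_le_rpow_of_nonpos (jap_pos y) hyc (neg_nonpos.mpr hα)) hyβ)
  · exact absurd (not_le.mp hyR) hyR'
  all_goals exact zero_le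

noncomputable def convHalfConst (d : ℕ) (α β : ℝ) : ℝ :=
  2 ^ (α + β + d) / (1 - 2 ^ (β - d)) + 4 ^ d / (1 - 2 ^ ((d : ℝ) - (α + β)))

lemma convHalf_le {α β : ℝ} (hα : 0 ≤ α) (hβ : 0 ≤ β) (hβd : β < d) (hαβ : d < α + β)
    (c : V d) :
    convHalf α β c ≤ ENNReal.ofReal (convHalfConst d α β * jap c ^ ((d : ℝ) - (α + β))) := by
  set R := jap c
  have hR : 0 < R := jap_pos c
  calc convHalf α β c
      ≤ ENNReal.ofReal ((R / 2) ^ (-α)) *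
            ∑' y : V d, (if jap y ≤ R then ENNReal.ofReal (jap y ^ (-β)) else 0) +
          ∑' y : V d, (if R < jap y then ENNReal.ofReal (jap y ^ (-(α + β))) else 0) := by
        rw [← ENNReal.tsum_mul_left, ← ENNReal.tsum_add]
        exact ENNReal.tsum_le_tsum (convHalf_summand_le β hα c)
    _ ≤ ENNReal.ofReal ((R / 2) ^ (-α)) *
          ENNReal.ofReal (2 ^ ((d : ℝ) + β) * R ^ ((d : ℝ) - β) / (1 - 2 ^ (β - d))) +
        ENNReal.ofReal (4 ^ d * R ^ ((d : ℝ) - (α + β)) / (1 - 2 ^ ((d : ℝ) - (α + β)))) :=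
        add_le_add (by gcongr; exact tsum_ite_jap_le_rpow_neg_le hβ hβd hR)
          (tsum_ite_lt_jap_rpow_neg_le hαβ hR)
    _ = ENNReal.ofReal (convHalfConst d α β * R ^ ((d : ℝ) - (α + β))) := by
        have hD : 0 < 1 - (2 : ℝ) ^ (β - d) :=
          sub_pos.mpr (Real.rpow_lt_one_of_one_lt_of_neg one_lt_two (by linarith))
        have hD' : 0 < 1 - (2 : ℝ) ^ ((d : ℝ) - (α + β)) :=
          sub_pos.mpr (Real.rpow_lt_one_of_one_lt_of_neg one_lt_two (by linarith))
        rw [← ENNReal.ofReal_mul (by positivity), ← ENNReal.ofReal_add (by positivity)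
          (by positivity), convHalfConst, add_mul]
        have hpow : (R / 2) ^ (-α) * (2 ^ ((d : ℝ) + β) * R ^ ((d : ℝ) - β)) =
            2 ^ (α + β + d) * R ^ ((d : ℝ) - (α + β)) := by
          rw [Real.div_rpow hR.le zero_le_two, Real.rpow_sub hR, Real.rpow_sub hR,
            Real.rpow_add two_pos, Real.rpow_add two_pos, Real.rpow_add two_pos,
            Real.rpow_add hR, Real.rpow_neg hR.le, Real.rpow_neg zero_le_two]
          field_simp
        rw [← mul_div_assoc, hpow]
        congr 1
        ring

lemma convHalfConst_le {α β ε : ℝ} (hε : 0 < ε) (hα : α ≤ d - ε) (hβ : β ≤ d - ε)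
    (hαβ : d + ε ≤ α + β) :
    convHalfConst d α β ≤ (8 ^ d + 4 ^ d) * (d + 2) / ε := by
  have hgap : ∀ t, ε ≤ t → (1 - (2 : ℝ) ^ (-t))⁻¹ ≤ (d + 2) / ε := fun t ht => by
    refine (inv_one_sub_two_rpow_neg_le (hε.trans_le ht)).trans ?_
    calc 1 + 2 / t ≤ 1 + 2 / ε := by gcongr
      _ ≤ (d + 2) / ε := by
        rw [add_div]
        gcongr
        exact (one_le_div hε).mpr (by linarith)
  have hgap₀ : ∀ t : ℝ, 0 < t → 0 ≤ (1 - (2 : ℝ) ^ (-t))⁻¹ := fun t ht =>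
    inv_nonneg.mpr (sub_nonneg.mpr (Real.rpow_le_one_of_one_le_of_nonpos one_le_two (by linarith)))
  have h8 : (2 : ℝ) ^ (α + β + d) ≤ 8 ^ d := by
    calc (2 : ℝ) ^ (α + β + d) ≤ 2 ^ ((3 * d : ℕ) : ℝ) :=
          Real.rpow_le_rpow_of_exponent_le one_le_two (by push_cast; linarith)
      _ = 8 ^ d := by rw [Real.rpow_natCast, pow_mul]; norm_num
  rw [convHalfConst, div_eq_mul_inv, div_eq_mul_inv, ← neg_sub (d : ℝ) β,
    ← neg_sub (α + β) (d : ℝ)]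
  calc _ ≤ 8 ^ d * ((d + 2) / ε) + 4 ^ d * ((d + 2) / ε) :=
        add_le_add (mul_le_mul h8 (hgap _ (by linarith)) (hgap₀ _ (by linarith)) (by positivity))
          (mul_le_mul_of_nonneg_left (hgap _ (by linarith)) (by positivity))
    _ = _ := by ring

lemma convHalf_le_of_gap {α β ε : ℝ} (hε : 0 < ε) (hα : 0 ≤ α) (hβ : 0 ≤ β) (hαd : α ≤ d - ε)
    (hβd : β ≤ d - ε) (hαβ : d + ε ≤ α + β) (c : V d) :
    convHalf α β c ≤
      ENNReal.ofReal ((8 ^ d + 4 ^ d) * (d + 2) / ε * jap c ^ ((d : ℝ) - (α + β))) :=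
  (convHalf_le hα hβ (by linarith) (by linarith) c).trans <| ENNReal.ofReal_le_ofReal <|
    mul_le_mul_of_nonneg_right (convHalfConst_le hε hαd hβd hαβ)
      (Real.rpow_nonneg (jap_pos c).le _)

end LatticeSums

theorem convolution_of_powers_bound_general (d : ℕ) :
    ∃ C : ℝ, 0 < C ∧ ∀ ε : ℝ, 0 < ε → ∀ α β : ℝ,
      3 * (d : ℝ) / 4 ≤ α → α ≤ (d : ℝ) - ε → 3 * (d : ℝ) / 4 ≤ β → β ≤ (d : ℝ) - ε →
      ∀ a b : V d,
        (∑' x : V d, jap (a - x) ^ (-α) * jap (x - b) ^ (-β)) ≤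
          C * ε⁻¹ * jap (a - b) ^ (-(α + β - (d : ℝ))) := by
  refine ⟨2 * ((8 ^ d + 4 ^ d) * (d + 2)), by positivity, ?_⟩
  intro ε hε α β hα₁ hα₂ hβ₁ hβ₂ a b
  have hR := jap_pos (a - b)
  have hterm : ∀ y : V d, 0 ≤ jap (a - b - y) ^ (-α) * jap y ^ (-β) := fun y =>
    mul_nonneg (Real.rpow_nonneg (jap_pos _).le _) (Real.rpow_nonneg (jap_pos _).le _)
  calc ∑' x : V d, jap (a - x) ^ (-α) * jap (x - b) ^ (-β)
      = ∑' y : V d, jap (a - b - y) ^ (-α) * jap y ^ (-β) := by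
        rw [← (Equiv.subRight b).tsum_eq fun y => jap (a - b - y) ^ (-α) * jap y ^ (-β)]
        simp only [Equiv.subRight_apply, sub_sub_sub_cancel_right]
    _ ≤ _ := by
      refine tsum_le_of_tsum_ofReal_le hterm (by positivity) ?_
      calc _ ≤ convHalf α β (a - b) + convHalf β α (a - b) := tsum_conv_le_convHalf_add α β _
        _ ≤ _ := add_le_add
          (convHalf_le_of_gap hε (by linarith) (by linarith) hα₂ hβ₂ (by linarith) _)
          (convHalf_le_of_gap hε (by linarith) (by linarith) hβ₂ hα₂ (by linarith) _)
        _ = _ := by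
          rw [add_comm β α, ← ENNReal.ofReal_add (by positivity) (by positivity), neg_sub]
          congr 1
          ring

/-- Lemma 2.7: `∑_x ⟨a-x⟩^{-α} ⟨x-b⟩^{-β} ≤ C ε^{-1} ⟨a-b⟩^{-(α+β-d)}`. -/
theorem convolution_of_powers_bound (d : ℕ) (hd : 1 ≤ d) :
    ∃ C : ℝ, 0 < C ∧ ∀ ε : ℝ, 0 < ε → ∀ α β : ℝ,
      3 * (d : ℝ) / 4 ≤ α → α ≤ (d : ℝ) - ε → 3 * (d : ℝ) / 4 ≤ β → β ≤ (d : ℝ) - ε →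
      ∀ a b : V d,
        (∑' x : V d, jap (a - x) ^ (-α) * jap (x - b) ^ (-β)) ≤
          C * ε⁻¹ * jap (a - b) ^ (-(α + β - (d : ℝ))) :=
  convolution_of_powers_bound_general d
end

section
/- Let n ≥ 2 and m ≥ 1, and let 0 = j_{−1} < j_0 < j_1 < … < j_m < n be integers such that the sets E_l := (j_{l−2}, j_{l−1}) ∩ ℤ and F_l := (j_l, n) ∩ ℤ are nonempty for every 1 ≤ l ≤ m. Then there exists an absolute constant C > 0 and subsets E'_l, F'_l ⊆ (0, n) ∩ ℤ (1 ≤ l ≤ m) such that, for every d ≥ 1, ⋂_{l=1}^m { x̄ ∈ (ℤ^d)^{n−1} : { x_u : u ∈ E_l } ∩ { x_v : v ∈ F_l } = ∅ } = ⋂_{l=1}^m { x̄ ∈ (ℤ^d)^{n−1} : { x_u : u ∈ E'_l } ∩ { x_v : v ∈ F'_l } = ∅ }, and Σ_{l=1}^m (|E'_l| + |F'_l|) ≤ C · n · log(n+1). -/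
open MeasureTheory ProbabilityTheory
open scoped ENNReal NNReal BigOperators

/-! The pairs `(u, v)` to be kept apart form a staircase `⋃ₗ Eₗ × (gₗ, n)` with `g`
monotone. Cutting it at the middle index `c`, the rectangle `(E_a ∪ ⋯ ∪ E_c) × (g_c, n)` takes
everything above height `g_c`; what remains to the left is a smaller staircase capped at `g_c`,
and the right half is untouched. Recursing on both halves yields one rectangle per index. On each
level of the recursion the sides of the rectangles are disjoint, so a level costs `O(n)`, and
there are `O(log m)` levels. -/

open Finset

theorem biUnion_Ico_split {β : Type*} [DecidableEq β] (f : ℕ → Finset β) {a b c : ℕ}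
    (hac : a ≤ c) (hcb : c < b) :
    (Ico a b).biUnion f = (Ico a c).biUnion f ∪ (f c ∪ (Ico (c + 1) b).biUnion f) := by
  have : Ico a b = Ico a c ∪ insert c (Ico (c + 1) b) := by
    ext; simp only [mem_union, mem_insert, mem_Ico]; omega
  rw [this, union_biUnion, biUnion_insert]

theorem sum_Ico_split (f : ℕ → ℕ) {a b c : ℕ} (hac : a ≤ c) (hcb : c < b) :
    ∑ l ∈ Ico a b, f l = ∑ l ∈ Ico a c, f l + (f c + ∑ l ∈ Ico (c + 1) b, f l) := by
  rw [← sum_Ico_consecutive f hac hcb.le, sum_eq_sum_Ico_succ_bot hcb]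

theorem Nat.log_two_add_one_le_of_le_half {k k' : ℕ} (hk : 2 ≤ k) (h : k' ≤ k / 2) :
    Nat.log 2 k' + 1 ≤ Nat.log 2 k := by
  have := Nat.log_mono_right (b := 2) h
  have := Nat.log_pos (b := 2) one_lt_two hk
  rw [Nat.log_div_base] at *
  omega

section BisectCover

variable {α : Type*} [DecidableEq α] (E : ℕ → Finset α) (g : ℕ → ℕ)

/-- The rectangle assigned to the index `l` when the staircase `⋃_{a ≤ l < b} E l × (g l, N)`
is split recursively at its middle index `c`; the left half is capped at `g c + 1`, i.e. keeps
the heights `≤ g c`. -/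
def bisectCover (a b N l : ℕ) : Finset α × Finset ℕ :=
  if hab : a < b then
    if l < (a + b) / 2 then bisectCover a ((a + b) / 2) (g ((a + b) / 2) + 1) l
    else if l = (a + b) / 2 then ((Icc a ((a + b) / 2)).biUnion E, Ioo (g ((a + b) / 2)) N)
    else bisectCover ((a + b) / 2 + 1) b N l
  else (∅, ∅)
termination_by b - a
decreasing_by all_goals omega

variable {E g} {a b N l : ℕ}

theorem bisectCover_of_lt_mid (hab : a < b) (hl : l < (a + b) / 2) :
    bisectCover E g a b N l = bisectCover E g a ((a + b) / 2) (g ((a + b) / 2) + 1) l := by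
  rw [bisectCover, dif_pos hab, if_pos hl]

theorem bisectCover_mid (hab : a < b) :
    bisectCover E g a b N ((a + b) / 2) =
      ((Icc a ((a + b) / 2)).biUnion E, Ioo (g ((a + b) / 2)) N) := by
  rw [bisectCover, dif_pos hab, if_neg (lt_irrefl _), if_pos rfl]

theorem bisectCover_of_mid_lt (hab : a < b) (hl : (a + b) / 2 < l) :
    bisectCover E g a b N l = bisectCover E g ((a + b) / 2 + 1) b N l := by
  rw [bisectCover, dif_pos hab, if_neg (by omega), if_neg (by omega)]

variable (g) in
theorem bisectCover_induction {motive : ℕ → ℕ → ℕ → Prop}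
    (of_le : ∀ a b N, b ≤ a → motive a b N)
    (step : ∀ a b N, a < b → motive a ((a + b) / 2) (g ((a + b) / 2) + 1) →
      motive ((a + b) / 2 + 1) b N → motive a b N)
    (a b N : ℕ) : motive a b N := by
  induction h : b - a using Nat.strong_induction_on generalizing a b N with
  | _ k ih =>
    rcases le_or_gt b a with hba | hab
    · exact of_le a b N hba
    · exact step a b N hab (ih _ (by omega) _ _ _ rfl) (ih _ (by omega) _ _ _ rfl)

theorem bisectCover_fst_subset : (bisectCover E g a b N l).1 ⊆ (Ico a b).biUnion E := by
  induction a, b, N using bisectCover_induction g with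
  | of_le a b N hba => simp [bisectCover, not_lt.2 hba]
  | step a b N hab ihL ihR =>
    rcases lt_trichotomy l ((a + b) / 2) with hl | rfl | hl
    · rw [bisectCover_of_lt_mid hab hl]
      exact ihL.trans (biUnion_subset_biUnion_of_subset_left _ (Ico_subset_Ico_right (by omega)))
    · rw [bisectCover_mid hab]
      refine biUnion_subset_biUnion_of_subset_left _ fun t ht => ?_
      simp only [mem_Icc, mem_Ico] at ht ⊢
      omega
    · rw [bisectCover_of_mid_lt hab hl]
      exact ihR.trans (biUnion_subset_biUnion_of_subset_left _ (Ico_subset_Ico_left (by omega)))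

theorem bisectCover_snd_subset (hg : MonotoneOn g (Set.Ico a b))
    (hN : ∀ l ∈ Set.Ico a b, g l < N) :
    (bisectCover E g a b N l).2 ⊆ (Ico a b).biUnion fun t => Ioo (g t) N := by
  induction a, b, N using bisectCover_induction g with
  | of_le a b N hba => simp [bisectCover, not_lt.2 hba]
  | step a b N hab ihL ihR =>
    set c := (a + b) / 2
    rcases lt_trichotomy l c with hl | rfl | hl
    · have hgc : ∀ t ∈ Set.Ico a c, g t < g c + 1 := fun t ht =>
        Nat.lt_succ_of_le (hg ⟨ht.1, by have := ht.2; omega⟩ ⟨by omega, by omega⟩ ht.2.le)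
      rw [bisectCover_of_lt_mid hab hl]
      refine (ihL (hg.mono (Set.Ico_subset_Ico_right (by omega))) hgc).trans fun v hv => ?_
      simp only [mem_biUnion, mem_Ico, mem_Ioo] at hv ⊢
      obtain ⟨t, ht, hv⟩ := hv
      have := hN c ⟨by omega, by omega⟩
      exact ⟨t, ⟨ht.1, by omega⟩, hv.1, by omega⟩
    · rw [bisectCover_mid hab]
      exact subset_biUnion_of_mem (fun t => Ioo (g t) N) (mem_Ico.2 ⟨by omega, by omega⟩)
    · rw [bisectCover_of_mid_lt hab hl]
      exact (ihR (hg.mono (Set.Ico_subset_Ico_left (by omega)))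
        fun t ht => hN t ⟨by have := ht.1; omega, ht.2⟩).trans
        (biUnion_subset_biUnion_of_subset_left _ (Ico_subset_Ico_left (by omega)))

theorem biUnion_prod_Ioo_cut {c : ℕ} (hac : a ≤ c) (hg : ∀ l ∈ Ico a c, g l ≤ g c)
    (hN : g c < N) :
    (Ico a c).biUnion (fun l => E l ×ˢ Ioo (g l) (g c + 1)) ∪
        (Icc a c).biUnion E ×ˢ Ioo (g c) N =
      (Ico a c).biUnion (fun l => E l ×ˢ Ioo (g l) N) ∪ E c ×ˢ Ioo (g c) N := by
  ext ⟨u, v⟩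
  simp only [mem_union, mem_biUnion, mem_product, mem_Ioo, mem_Ico, mem_Icc]
  constructor
  · rintro (⟨l, hl, hu, hv⟩ | ⟨⟨t, ht, hu⟩, hv⟩)
    · exact Or.inl ⟨l, hl, hu, hv.1, by omega⟩
    · rcases ht.2.lt_or_eq with htc | rfl
      · exact Or.inl
          ⟨t, ⟨ht.1, htc⟩, hu, (hg t (mem_Ico.2 ⟨ht.1, htc⟩)).trans_lt hv.1, hv.2⟩
      · exact Or.inr ⟨hu, hv⟩
  · rintro (⟨l, hl, hu, hv⟩ | ⟨hu, hv⟩)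
    · by_cases hvc : v ≤ g c
      · exact Or.inl ⟨l, hl, hu, hv.1, by omega⟩
      · exact Or.inr ⟨⟨l, ⟨hl.1, hl.2.le⟩, hu⟩, by omega, hv.2⟩
    · exact Or.inr ⟨⟨c, ⟨hac, le_rfl⟩, hu⟩, hv⟩

theorem biUnion_bisectCover (hg : MonotoneOn g (Set.Ico a b))
    (hN : ∀ l ∈ Set.Ico a b, g l < N) :
    (Ico a b).biUnion (fun l => (bisectCover E g a b N l).1 ×ˢ (bisectCover E g a b N l).2) =
      (Ico a b).biUnion (fun l => E l ×ˢ Ioo (g l) N) := by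
  induction a, b, N using bisectCover_induction g with
  | of_le a b N hba => simp [Ico_eq_empty_of_le hba]
  | step a b N hab ihL ihR =>
    set c := (a + b) / 2
    have hac : a ≤ c := by omega
    have hcb : c < b := by omega
    have hgc : ∀ l ∈ Set.Ico a c, g l ≤ g c := fun l hl =>
      hg ⟨hl.1, by have := hl.2; omega⟩ ⟨hac, hcb⟩ hl.2.le
    have hL : (Ico a c).biUnion
        (fun l => (bisectCover E g a b N l).1 ×ˢ (bisectCover E g a b N l).2) =
        (Ico a c).biUnion (fun l => E l ×ˢ Ioo (g l) (g c + 1)) := by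
      rw [← ihL (hg.mono (Set.Ico_subset_Ico_right hcb.le))
        fun l hl => Nat.lt_succ_of_le (hgc l hl)]
      exact biUnion_congr rfl fun l hl => by rw [bisectCover_of_lt_mid hab (mem_Ico.1 hl).2]
    have hR : (Ico (c + 1) b).biUnion
        (fun l => (bisectCover E g a b N l).1 ×ˢ (bisectCover E g a b N l).2) =
        (Ico (c + 1) b).biUnion (fun l => E l ×ˢ Ioo (g l) N) := by
      rw [← ihR (hg.mono (Set.Ico_subset_Ico_left (by omega)))
        fun l hl => hN l ⟨by have := hl.1; omega, hl.2⟩]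
      exact biUnion_congr rfl fun l hl => by
        rw [bisectCover_of_mid_lt hab (by have := (mem_Ico.1 hl).1; omega)]
    rw [biUnion_Ico_split _ hac hcb, biUnion_Ico_split (fun l => E l ×ˢ Ioo (g l) N) hac hcb,
      hL, hR, bisectCover_mid hab, ← union_assoc, ← union_assoc,
      biUnion_prod_Ioo_cut hac (fun l hl => hgc l (by simpa using hl)) (hN c ⟨hac, hcb⟩)]

theorem card_biUnion_Ioo_add_card_biUnion_Ioo_le (hg : MonotoneOn g (Set.Ico a b)) {c : ℕ}
    (hac : a ≤ c) (hcb : c < b) (hN : g c < N) :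
    ((Ico a c).biUnion fun t => Ioo (g t) (g c + 1)).card +
        ((Ico (c + 1) b).biUnion fun t => Ioo (g t) N).card ≤
      ((Ico a b).biUnion fun t => Ioo (g t) N).card := by
  rw [← card_union_of_disjoint]
  · refine card_le_card (union_subset (fun v hv => ?_)
      (biUnion_subset_biUnion_of_subset_left _ (Ico_subset_Ico_left (by omega))))
    simp only [mem_biUnion, mem_Ico, mem_Ioo] at hv ⊢
    obtain ⟨t, ht, hv⟩ := hv
    exact ⟨t, ⟨ht.1, by omega⟩, hv.1, by omega⟩
  · refine disjoint_left.2 fun v hv hv' => ?_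
    simp only [mem_biUnion, mem_Ico, mem_Ioo] at hv hv'
    obtain ⟨t, ht, hv'⟩ := hv'
    obtain ⟨-, -, -, hv⟩ := hv
    have := hg ⟨hac, hcb⟩ ⟨by omega, ht.2⟩ (by omega : c ≤ t)
    omega

theorem sum_card_bisectCover_le (hg : MonotoneOn g (Set.Ico a b))
    (hN : ∀ l ∈ Set.Ico a b, g l < N) :
    ∑ l ∈ Ico a b, ((bisectCover E g a b N l).1.card + (bisectCover E g a b N l).2.card) ≤
      (Nat.log 2 (b - a) + 1) *
        (∑ t ∈ Ico a b, (E t).card + ((Ico a b).biUnion fun t => Ioo (g t) N).card) := by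
  induction a, b, N using bisectCover_induction g with
  | of_le a b N hba => simp [Ico_eq_empty_of_le hba]
  | step a b N hab ihL ihR =>
    set c := (a + b) / 2
    have hac : a ≤ c := by omega
    have hcb : c < b := by omega
    have hgc : ∀ l ∈ Set.Ico a c, g l ≤ g c := fun l hl =>
      hg ⟨hl.1, by have := hl.2; omega⟩ ⟨hac, hcb⟩ hl.2.le
    specialize ihL (hg.mono (Set.Ico_subset_Ico_right hcb.le))
      fun l hl => Nat.lt_succ_of_le (hgc l hl)
    specialize ihR (hg.mono (Set.Ico_subset_Ico_left (by omega)))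
      fun l hl => hN l ⟨by have := hl.1; omega, hl.2⟩
    set L := ∑ l ∈ Ico a c,
      ((bisectCover E g a c (g c + 1) l).1.card + (bisectCover E g a c (g c + 1) l).2.card)
    set R := ∑ l ∈ Ico (c + 1) b,
      ((bisectCover E g (c + 1) b N l).1.card + (bisectCover E g (c + 1) b N l).2.card)
    set WL := ∑ t ∈ Ico a c, (E t).card +
      ((Ico a c).biUnion fun t => Ioo (g t) (g c + 1)).card
    set WR := ∑ t ∈ Ico (c + 1) b, (E t).card +
      ((Ico (c + 1) b).biUnion fun t => Ioo (g t) N).card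
    set W := ∑ t ∈ Ico a b, (E t).card + ((Ico a b).biUnion fun t => Ioo (g t) N).card
    have hsplit : ∑ l ∈ Ico a b, ((bisectCover E g a b N l).1.card +
        (bisectCover E g a b N l).2.card) =
        L + (((Icc a c).biUnion E).card + (Ioo (g c) N).card + R) := by
      rw [sum_Ico_split _ hac hcb, bisectCover_mid hab]
      refine congrArg₂ (· + ·) ?_ (congrArg₂ (· + ·) rfl ?_)
      · exact sum_congr rfl fun l hl => by rw [bisectCover_of_lt_mid hab (mem_Ico.1 hl).2]
      · exact sum_congr rfl fun l hl => by
          rw [bisectCover_of_mid_lt hab (by have := (mem_Ico.1 hl).1; omega)]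
    have hnode : ((Icc a c).biUnion E).card + (Ioo (g c) N).card ≤ W := by
      refine add_le_add (card_biUnion_le.trans (sum_le_sum_of_subset fun t ht => ?_))
        (card_le_card (subset_biUnion_of_mem (fun t => Ioo (g t) N) (mem_Ico.2 ⟨hac, hcb⟩)))
      simp only [mem_Icc, mem_Ico] at ht ⊢
      omega
    have hW : WL + WR ≤ W := by
      have hE := sum_Ico_split (fun t => (E t).card) hac hcb
      have hF := card_biUnion_Ioo_add_card_biUnion_Ioo_le hg hac hcb (hN c ⟨hac, hcb⟩)
      simp only [WL, WR, W]
      omega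
    have hdepth : L + R ≤ Nat.log 2 (b - a) * (WL + WR) := by
      rcases (show b - a = 1 ∨ 2 ≤ b - a by omega) with h1 | h2
      · have hL : L = 0 := by simp [L, show c = a by omega]
        have hR : R = 0 := by simp [R, show c + 1 = b by omega]
        simp [hL, hR]
      · have := Nat.log_two_add_one_le_of_le_half h2 (show c - a ≤ (b - a) / 2 by omega)
        have := Nat.log_two_add_one_le_of_le_half h2 (show b - (c + 1) ≤ (b - a) / 2 by omega)
        nlinarith
    rw [hsplit]
    nlinarith

end BisectCover

theorem biInter_setOf_forall_mem_prod {ι α β γ : Type*} [DecidableEq α] [DecidableEq β]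
    (s : Finset ι) (A : ι → Finset α) (B : ι → Finset β) (P : α → β → γ → Prop) :
    ⋂ i ∈ s, {y | ∀ u ∈ A i, ∀ v ∈ B i, P u v y} =
      {y | ∀ p ∈ s.biUnion fun i => A i ×ˢ B i, P p.1 p.2 y} := by
  ext y
  simp only [Set.mem_iInter₂, Set.mem_ofPred_eq, mem_biUnion, mem_product, Prod.forall]
  grind

theorem sum_card_Ioo_consecutive_le (js : ℕ → ℕ) {k : ℕ} (hjs : ∀ t < k, js t ≤ js (t + 1)) :
    ∑ t ∈ Ico 1 (k + 1), (Ioo (js (t - 1)) (js t)).card ≤ js k := by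
  induction k with
  | zero => simp
  | succ k ih =>
    rw [sum_Ico_succ_top (by omega), Nat.card_Ioo, Nat.add_sub_cancel]
    have := ih fun t ht => hjs t (by omega)
    have := hjs k (by omega)
    omega

theorem natLog_two_add_one_mul_le {m n : ℕ} (hmn : m ≤ n) (hn : 2 ≤ n) :
    (((Nat.log 2 m + 1) * (n + n) : ℕ) : ℝ) ≤ 6 * n * Real.log (n + 1) := by
  have hn' : (2 : ℝ) ≤ n := by exact_mod_cast hn
  have hmn' : (Nat.log 2 m : ℝ) ≤ Nat.log 2 n := by exact_mod_cast Nat.log_mono_right hmn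
  have hlogb : (Nat.log 2 n : ℝ) ≤ Real.log n / Real.log 2 := by
    simpa [Real.logb] using Real.natLog_le_logb n 2
  have hlog2 : 1 / 2 < Real.log 2 := by linarith [Real.log_two_gt_d9]
  have hlogn : Real.log n ≤ Real.log (n + 1) := Real.log_le_log (by positivity) (by linarith)
  have hone : 1 ≤ Real.log (n + 1) := by
    rw [Real.le_log_iff_exp_le (by positivity)]
    linarith [Real.exp_one_lt_d9]
  have : Real.log n / Real.log 2 ≤ 2 * Real.log n := by
    rw [div_le_iff₀ (by linarith)]
    nlinarith [Real.log_nonneg (by linarith : (1 : ℝ) ≤ n)]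
  push_cast
  nlinarith

/-- Here `js (t+1)` plays the role of `j_t` (so `js 0 = j_{-1} = 0`). -/
theorem efficient_disjointness_encoding :
    ∃ C : ℝ, 0 < C ∧ ∀ n m : ℕ, 2 ≤ n → 1 ≤ m →
      ∀ js : ℕ → ℕ, js 0 = 0 → (∀ t, t ≤ m → js t < js (t + 1)) → js (m + 1) < n →
      (∀ l, 1 ≤ l → l ≤ m →
        (Finset.Ioo (js (l - 1)) (js l)).Nonempty ∧
          (Finset.Ioo (js (l + 1)) n).Nonempty) →
      ∃ E' F' : ℕ → Finset ℕ,
        (∀ l, 1 ≤ l → l ≤ m → E' l ⊆ Finset.Ioo 0 n ∧ F' l ⊆ Finset.Ioo 0 n) ∧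
        (∀ d : ℕ, 1 ≤ d →
          (⋂ l ∈ Finset.Icc 1 m,
              { y : Fin (n - 1) → V d |
                ∀ u ∈ Finset.Ioo (js (l - 1)) (js l), ∀ v ∈ Finset.Ioo (js (l + 1)) n,
                  pathVal n y u ≠ pathVal n y v }) =
            ⋂ l ∈ Finset.Icc 1 m,
              { y : Fin (n - 1) → V d |
                ∀ u ∈ E' l, ∀ v ∈ F' l, pathVal n y u ≠ pathVal n y v }) ∧
        ((∑ l ∈ Finset.Icc 1 m, ((E' l).card + (F' l).card) : ℕ) : ℝ) ≤
          C * n * Real.log (n + 1) := by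
  refine ⟨6, by norm_num, fun n m hn _ js _ hjs hjsn _ => ?_⟩
  have hmono : StrictMonoOn js (Set.Iic (m + 1)) :=
    strictMonoOn_Iic_of_lt_succ fun t ht => hjs t (Nat.lt_succ_iff.1 ht)
  have hle : ∀ {s t}, s ≤ t → t ≤ m + 1 → js s ≤ js t := fun hst ht =>
    hmono.monotoneOn (Set.mem_Iic.2 (hst.trans ht)) (Set.mem_Iic.2 ht) hst
  have hg : MonotoneOn (fun t => js (t + 1)) (Set.Ico 1 (m + 1)) := fun s _ t ht hst =>
    hle (by omega) (by have := ht.2; omega)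
  have hgn : ∀ l ∈ Set.Ico 1 (m + 1), js (l + 1) < n := fun l hl =>
    (hle (by have := hl.2; omega) le_rfl).trans_lt hjsn
  have hjsm : js m < n := (hjs m le_rfl).trans hjsn
  have hF : ((Ico 1 (m + 1)).biUnion fun t => Ioo (js (t + 1)) n) ⊆ Ioo 0 n :=
    biUnion_subset.2 fun t _ => Ioo_subset_Ioo_left (Nat.zero_le _)
  rw [← Ico_add_one_right_eq_Icc]
  set R := bisectCover (fun t => Ioo (js (t - 1)) (js t)) (fun t => js (t + 1)) 1 (m + 1) n
  refine ⟨fun l => (R l).1, fun l => (R l).2, fun l _ _ => ⟨?_, ?_⟩, fun d _ => ?_, ?_⟩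
  · refine bisectCover_fst_subset.trans (biUnion_subset.2 fun t ht => ?_)
    exact Ioo_subset_Ioo (Nat.zero_le _)
      ((hle (by have := (mem_Ico.1 ht).2; omega) le_rfl).trans hjsn.le)
  · exact (bisectCover_snd_subset hg hgn).trans hF
  · rw [biInter_setOf_forall_mem_prod, biInter_setOf_forall_mem_prod, biUnion_bisectCover hg hgn]
  · have hmn : m ≤ n := (hmono.Iic_id_le m (by omega)).trans hjsm.le
    refine le_trans ?_ (natLog_two_add_one_mul_le hmn hn)
    refine Nat.cast_le.2 ((sum_card_bisectCover_le hg hgn).trans ?_)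
    rw [Nat.add_sub_cancel]
    gcongr
    · exact (sum_card_Ioo_consecutive_le js fun t ht => (hjs t ht.le).le).trans hjsm.le
    · exact (card_le_card hF).trans (by simp)
end
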